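/- arXiv:2603.05107 — 4 statements merged into one kernel-verified Lean document; each statement's English description precedes it below -/
import Mathlib

section
/- The minimum of Σ_j C_j over all schedules of n given jobs on m uniform machines equals Σ_{k=1}^{n} ω_{(k)}·p_{(k)}, where ω_{(1)} ≤ ω_{(2)} ≤ … ≤ ω_{(n)} are the n smallest elements of the multiset { ℓ/V_i : 1 ≤ i ≤ m, 1 ≤ ℓ ≤ n } and p_{(1)} ≥ p_{(2)} ≥ … ≥ p_{(n)} are the processing times of the n jobs sorted in non-increasing order; moreover this minimum is attained by any schedule that assigns the job with the k-th largest processing time to a position whose positional weight is ω_{(k)}, for every k. -/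
/-- A schedule of a finite set of jobs `J` on `m` uniform machines: each job gets a
machine and a (1-based) position, positions on each machine are pairwise distinct and
the occupied positions on each machine are exactly `1, …, η_i`. -/
structure Schedule (J : Type) (m : ℕ) where
  mach : J → Fin m
  pos : J → ℕ
  pos_pos : ∀ j, 1 ≤ pos j
  inj : ∀ j j', mach j = mach j' → pos j = pos j' → j = j'
  contiguous : ∀ j, 2 ≤ pos j → ∃ j', mach j' = mach j ∧ pos j' = pos j - 1

namespace Schedule

variable {J : Type} {m : ℕ} [Fintype J]

/-- Number `η_i` of jobs scheduled on machine `i`. -/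
def load (σ : Schedule J m) (i : Fin m) : ℕ :=
  (Finset.univ.filter fun j => σ.mach j = i).card

/-- Completion time of job `j`: jobs on a machine of speed `V i` are processed
consecutively from time 0 without idle time. -/
noncomputable def compl (σ : Schedule J m) (p : J → ℝ) (V : Fin m → ℝ) (j : J) : ℝ :=
  (∑ j' ∈ Finset.univ.filter
      (fun j' => σ.mach j' = σ.mach j ∧ σ.pos j' ≤ σ.pos j), p j') / V (σ.mach j)

/-- Total completion time `Σ_j C_j` of a schedule. -/
noncomputable def totalC (σ : Schedule J m) (p : J → ℝ) (V : Fin m → ℝ) : ℝ :=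
  ∑ j, σ.compl p V j

/-- Positional weight of job `j`: `(η_i + 1 - k)/V_i` where `k` is the position of `j`
on its machine `M_i`, which holds `η_i` jobs. -/
noncomputable def pw (σ : Schedule J m) (V : Fin m → ℝ) (j : J) : ℝ :=
  ((σ.load (σ.mach j) : ℝ) + 1 - (σ.pos j : ℝ)) / V (σ.mach j)

end Schedule

/-- The `n` smallest elements (in non-decreasing order) of the multiset
`{ ℓ/V_i : 1 ≤ i ≤ m, 1 ≤ ℓ ≤ n }` of positional weights. -/
noncomputable def sortedWeights (m n : ℕ) (V : Fin m → ℝ) : List ℝ :=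
  (((Finset.univ : Finset (Fin m × Fin n)).val.map
      (fun q => (((q.2 : ℕ) : ℝ) + 1) / V q.1)).sort (· ≤ ·)).take n

/-- The processing times sorted in non-increasing order. -/
noncomputable def sortedProcDesc {n : ℕ} (p : Fin n → ℝ) : List ℝ :=
  (((Finset.univ : Finset (Fin n)).val.map p).sort (· ≤ ·)).reverse

/-!
Summing completion times job by job, the job `ℓ`-th from the end of machine `i` is counted in
`ℓ` of them, so `Σ_j C_j = Σ_j ω_j p_j` with `ω_j` the positional weight of `j`. Distinct jobs
occupy distinct slots `(i, ℓ)`, so the positional weights of a schedule form a sub-multiset of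
`{ℓ/V_i}` and their `k`-th smallest is at least `ω_(k)`; the rearrangement inequality then gives
the lower bound. Conversely, since `ℓ/V_i` increases with `ℓ`, the `n` lightest slots fill an
initial segment from the end of every machine, hence are the slots of a schedule, and giving
them to the jobs in order of decreasing processing time attains the bound.
-/

open Finset

theorem List.Sublist.getElem_le_getElem_of_sortedLE {α : Type*} [Preorder α] {l₁ l₂ : List α}
    (h : l₁.Sublist l₂) (h₂ : l₂.SortedLE) {i : ℕ} (hi : i < l₁.length) :
    l₂[i]'(hi.trans_le h.length_le) ≤ l₁[i] := by
  obtain ⟨f, hf⟩ := List.sublist_iff_exists_orderEmbedding_getElem?_eq.1 h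
  obtain ⟨_, hget⟩ :=
    List.getElem?_eq_some_iff.1 ((hf i).symm.trans (List.getElem?_eq_getElem hi))
  rw [← hget]
  exact h₂.getElem_le_getElem_of_le f.strictMono.le_apply

theorem Multiset.getElem_sort_le_of_le {α : Type*} [LinearOrder α] {s t : Multiset α} (h : s ≤ t)
    {i : ℕ} (hi : i < s.card) :
    (t.sort (· ≤ ·))[i]'(by grind [Multiset.length_sort, Multiset.card_le_card h]) ≤
      (s.sort (· ≤ ·))[i]'(by rwa [Multiset.length_sort]) := by
  have hsub : (s.sort (· ≤ ·)).Sublist (t.sort (· ≤ ·)) := by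
    refine List.sublist_of_subperm_of_sortedLE ?_ (Multiset.pairwise_sort _ _).sortedLE
      (Multiset.pairwise_sort _ _).sortedLE
    rw [← Multiset.coe_le, Multiset.sort_eq, Multiset.sort_eq]
    exact h
  exact hsub.getElem_le_getElem_of_sortedLE (Multiset.pairwise_sort _ _).sortedLE _

theorem Multiset.sort_map_univ_eq_ofFn {α β : Type*} [Fintype α] [LinearOrder β] {N : ℕ}
    (f : α → β) (e : Fin N ≃ α) (he : Monotone (f ∘ e)) :
    (univ.val.map f).sort (· ≤ ·) = List.ofFn (f ∘ e) := by
  refine List.Perm.eq_of_sortedLE (Multiset.pairwise_sort _ _).sortedLE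
    (List.sortedLE_ofFn_iff.2 he) ?_
  rw [← Multiset.coe_eq_coe, Multiset.sort_eq, ← Fin.univ_val_map, ← Multiset.map_map,
    Multiset.map_univ_val_equiv]

theorem Finset.eq_range_card_of_forall_lt_mem {S : Finset ℕ} (h : ∀ k ∈ S, ∀ l < k, l ∈ S) :
    S = range #S := by
  refine eq_of_subset_of_card_le (fun k hk => ?_) (card_range _).le
  have : range (k + 1) ⊆ S := fun l hl => by
    rcases Nat.lt_succ_iff_lt_or_eq.1 (mem_range.1 hl) with hl | rfl
    exacts [h k hk l hl, hk]
  simpa using card_le_card this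

namespace Schedule

variable {J : Type} {m : ℕ}

theorem exists_pos_eq (σ : Schedule J m) (j : J) {l : ℕ} (hl : 1 ≤ l) (hlj : l ≤ σ.pos j) :
    ∃ j', σ.mach j' = σ.mach j ∧ σ.pos j' = l := by
  induction hlj using Nat.decreasingInduction with
  | self => exact ⟨j, rfl, rfl⟩
  | of_succ k _ ih =>
    obtain ⟨j', hmach, hpos⟩ := ih (by omega)
    obtain ⟨j'', hmach', hpos'⟩ := σ.contiguous j' (by omega)
    exact ⟨j'', hmach'.trans hmach, by omega⟩

variable [Fintype J] (σ : Schedule J m)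

def jobsOn (i : Fin m) : Finset J := {j | σ.mach j = i}

theorem mem_jobsOn {i : Fin m} {j : J} : j ∈ σ.jobsOn i ↔ σ.mach j = i := by simp [jobsOn]

theorem injOn_pos (i : Fin m) : Set.InjOn σ.pos (σ.jobsOn i) := fun _ hj _ hj' hpos =>
  σ.inj _ _ ((σ.mem_jobsOn.1 hj).trans (σ.mem_jobsOn.1 hj').symm) hpos

theorem image_pos_jobsOn (i : Fin m) : (σ.jobsOn i).image σ.pos = Icc 1 (σ.load i) := by
  have hcard : #((σ.jobsOn i).image σ.pos) = σ.load i := card_image_of_injOn (σ.injOn_pos i)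
  refine eq_of_subset_of_card_le (fun k hk => ?_) (by simp [hcard])
  obtain ⟨j, hj, rfl⟩ := mem_image.1 hk
  have hsub : Icc 1 (σ.pos j) ⊆ (σ.jobsOn i).image σ.pos := fun l hl => by
    obtain ⟨j', hmach, hpos⟩ := σ.exists_pos_eq j (mem_Icc.1 hl).1 (mem_Icc.1 hl).2
    exact mem_image.2 ⟨j', σ.mem_jobsOn.2 (hmach.trans (σ.mem_jobsOn.1 hj)), hpos⟩
  have := card_le_card hsub
  rw [Nat.card_Icc, hcard] at this
  exact mem_Icc.2 ⟨σ.pos_pos j, by omega⟩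

theorem load_le_card (i : Fin m) : σ.load i ≤ Fintype.card J := card_le_univ _

theorem pos_le_load (j : J) : σ.pos j ≤ σ.load (σ.mach j) := by
  have := mem_image_of_mem σ.pos (σ.mem_jobsOn.2 (rfl : σ.mach j = σ.mach j))
  rw [image_pos_jobsOn] at this
  exact (mem_Icc.1 this).2

theorem card_filter_le_pos (i : Fin m) {k : ℕ} (hk : 1 ≤ k) :
    #{j | σ.mach j = i ∧ k ≤ σ.pos j} = σ.load i + 1 - k := by
  rw [← filter_filter, ← jobsOn,
    ← card_image_of_injOn ((σ.injOn_pos i).mono (filter_subset _ _)), ← filter_image,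
    image_pos_jobsOn, ← Nat.card_Icc]
  congr 1
  ext l
  simp only [mem_filter, mem_Icc]
  omega

theorem totalC_eq_sum_pw_mul (p : J → ℝ) (V : Fin m → ℝ) :
    σ.totalC p V = ∑ j, σ.pw V j * p j := by
  have hswap : σ.totalC p V = ∑ j', ∑ j ∈ {j | σ.mach j = σ.mach j' ∧ σ.pos j' ≤ σ.pos j},
      p j' / V (σ.mach j') := by
    simp only [totalC, compl, sum_div, sum_filter]
    rw [sum_comm]
    refine sum_congr rfl fun j' _ => sum_congr rfl fun j _ => ?_
    by_cases h : σ.mach j' = σ.mach j <;> simp [h, eq_comm, ite_div]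
  rw [hswap]
  refine sum_congr rfl fun j _ => ?_
  rw [sum_const, σ.card_filter_le_pos _ (σ.pos_pos j), nsmul_eq_mul, pw,
    Nat.cast_sub (by linarith [σ.pos_le_load j])]
  push_cast
  ring

end Schedule

theorem sum_mul_sort_rev_le {α : Type*} [Semiring α] [LinearOrder α] [IsStrictOrderedRing α]
    [ExistsAddOfLE α] {n : ℕ} (f g : Fin n → α) :
    ∑ k, f (Tuple.sort f k) * g (Tuple.sort g k.rev) ≤ ∑ j, f j * g j := by
  have hanti : Antivary (f ∘ Tuple.sort f) (g ∘ Tuple.sort g ∘ Fin.revPerm) :=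
    (Tuple.monotone_sort f).antivary ((Tuple.monotone_sort g).comp_antitone Fin.rev_anti)
  calc ∑ k, f (Tuple.sort f k) * g (Tuple.sort g k.rev)
      ≤ ∑ k, f (Tuple.sort f k) * (g ∘ Tuple.sort g ∘ Fin.revPerm)
          (((Tuple.sort f).trans ((Tuple.sort g).symm.trans Fin.revPerm)) k) :=
        hanti.sum_mul_le_sum_mul_comp_perm
    _ = ∑ k, f (Tuple.sort f k) * g (Tuple.sort f k) := by simp
    _ = ∑ j, f j * g j := Equiv.sum_comp (Tuple.sort f) fun j => f j * g j

theorem sortedProcDesc_getD {n : ℕ} (p : Fin n → ℝ) (k : Fin n) :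
    (sortedProcDesc p).getD k 0 = p (Tuple.sort p k.rev) := by
  rw [sortedProcDesc, Multiset.sort_map_univ_eq_ofFn p _ (Tuple.monotone_sort p),
    List.getD_eq_getElem _ _ (by simp), List.getElem_reverse]
  simp only [List.getElem_ofFn, List.length_ofFn, Function.comp_apply]
  congr 2
  ext
  simp only [Fin.val_rev]
  omega

/-- Slot `(i, ℓ)` is the `(ℓ + 1)`-th position from the end on machine `i`. -/
noncomputable def slotWeight {m : ℕ} (n : ℕ) (V : Fin m → ℝ) (q : Fin m × Fin n) : ℝ :=
  (((q.2 : ℕ) : ℝ) + 1) / V q.1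

theorem sortedWeights_eq_take {m n : ℕ} (V : Fin m → ℝ) :
    sortedWeights m n V = ((univ.val.map (slotWeight n V)).sort (· ≤ ·)).take n := rfl

namespace Schedule

variable {m n : ℕ} (σ : Schedule (Fin n) m)

theorem totalC_eq_of_pairing {p : Fin n → ℝ} {V : Fin m → ℝ} (e : Fin n ≃ Fin n) {W P : List ℝ}
    (hP : ∀ k : Fin n, p (e k) = P.getD k 0) (hW : ∀ k : Fin n, σ.pw V (e k) = W.getD k 0) :
    σ.totalC p V = ∑ k ∈ range n, W.getD k 0 * P.getD k 0 := by
  rw [σ.totalC_eq_sum_pw_mul, ← e.sum_comp, ← Fin.sum_univ_eq_sum_range]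
  simp only [hP, hW]

def slot (j : Fin n) : Fin m × Fin n :=
  (σ.mach j, ⟨σ.load (σ.mach j) - σ.pos j, by
    have := Fintype.card_fin n ▸ σ.load_le_card (σ.mach j)
    have := σ.pos_pos j
    have := σ.pos_le_load j
    omega⟩)

theorem slot_injective : Function.Injective σ.slot := fun j j' h => by
  simp only [slot, Prod.mk.injEq, Fin.mk.injEq] at h
  obtain ⟨hmach, hpos⟩ := h
  have hj := σ.pos_le_load j
  have hj' := σ.pos_le_load j'
  rw [← hmach] at hpos hj'
  exact σ.inj j j' hmach (by omega)

theorem pw_eq_slotWeight (V : Fin m → ℝ) (j : Fin n) : σ.pw V j = slotWeight n V (σ.slot j) := by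
  rw [pw, slotWeight, slot, Nat.cast_sub (σ.pos_le_load j)]
  ring_nf

theorem map_pw_le (V : Fin m → ℝ) : univ.val.map (σ.pw V) ≤ univ.val.map (slotWeight n V) := by
  have hmap : univ.val.map (σ.pw V) = (univ.val.map σ.slot).map (slotWeight n V) := by
    rw [Multiset.map_map]
    exact Multiset.map_congr rfl fun j _ => σ.pw_eq_slotWeight V j
  rw [hmap]
  refine Multiset.map_le_map ((Multiset.le_iff_subset (univ.nodup.map σ.slot_injective)).2 ?_)
  exact fun q _ => mem_univ q

theorem sortedWeights_getD_le (V : Fin m → ℝ) (k : Fin n) :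
    (sortedWeights m n V).getD k 0 ≤ σ.pw V (Tuple.sort (σ.pw V) k) := by
  have hle := Multiset.getElem_sort_le_of_le (σ.map_pw_le V) (i := k) (by simp)
  simp only [Multiset.sort_map_univ_eq_ofFn _ _ (Tuple.monotone_sort _)] at hle
  have hk : (k : ℕ) < m * n := k.2.trans_le (Nat.le_mul_of_pos_left n (σ.mach k).pos)
  rw [sortedWeights_eq_take, List.getD_eq_getElem _ _ (by simpa using hk), List.getElem_take]
  simpa using hle

end Schedule

theorem sum_sortedWeights_mul_le_totalC {m n : ℕ} (p : Fin n → ℝ) (V : Fin m → ℝ)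
    (hp : ∀ j, 0 ≤ p j) (σ : Schedule (Fin n) m) :
    ∑ k ∈ range n, (sortedWeights m n V).getD k 0 * (sortedProcDesc p).getD k 0 ≤
      σ.totalC p V := by
  calc ∑ k ∈ range n, (sortedWeights m n V).getD k 0 * (sortedProcDesc p).getD k 0
      = ∑ k : Fin n, (sortedWeights m n V).getD k 0 * p (Tuple.sort p k.rev) := by
        rw [← Fin.sum_univ_eq_sum_range]
        simp only [sortedProcDesc_getD]
    _ ≤ ∑ k, σ.pw V (Tuple.sort (σ.pw V) k) * p (Tuple.sort p k.rev) :=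
        sum_le_sum fun k _ => mul_le_mul_of_nonneg_right (σ.sortedWeights_getD_le V k) (hp _)
    _ ≤ ∑ j, σ.pw V j * p j := sum_mul_sort_rev_le _ _
    _ = σ.totalC p V := (σ.totalC_eq_sum_pw_mul p V).symm

namespace Schedule

variable {J : Type} {m : ℕ} [Fintype J] {mach : J → Fin m} {r : J → ℕ}

theorem exists_revPos_eq_iff
    (hinj : ∀ j j', mach j = mach j' → r j = r j' → j = j')
    (hdown : ∀ j, ∀ l < r j, ∃ j', mach j' = mach j ∧ r j' = l) (i : Fin m) (l : ℕ) :
    (∃ j, mach j = i ∧ r j = l) ↔ l < #{j | mach j = i} := by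
  have hcard : #(({j | mach j = i} : Finset J).image r) = #{j | mach j = i} :=
    card_image_of_injOn fun j hj j' hj' => by
      simp only [coe_filter, mem_univ, true_and] at hj hj'
      exact hinj j j' (hj.trans hj'.symm)
  have himage : ({j | mach j = i} : Finset J).image r = range #{j | mach j = i} := by
    rw [← hcard]
    refine eq_range_card_of_forall_lt_mem fun k hk l hl => ?_
    obtain ⟨j, hj, rfl⟩ := mem_image.1 hk
    obtain ⟨j', hmach, rfl⟩ := hdown j l hl
    exact mem_image_of_mem r (by simpa [hmach] using hj)
  rw [← mem_range, ← himage]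
  simp

/-- `r j` is the position of `j` counted from the end of its machine, starting at `0`. -/
def ofRevPos (mach : J → Fin m) (r : J → ℕ)
    (hinj : ∀ j j', mach j = mach j' → r j = r j' → j = j')
    (hdown : ∀ j, ∀ l < r j, ∃ j', mach j' = mach j ∧ r j' = l) : Schedule J m where
  mach := mach
  pos j := #{j' | mach j' = mach j} - r j
  pos_pos j := by
    have := (exists_revPos_eq_iff hinj hdown (mach j) (r j)).1 ⟨j, rfl, rfl⟩
    omega
  inj j j' hmach hpos := by
    have hj := (exists_revPos_eq_iff hinj hdown (mach j) (r j)).1 ⟨j, rfl, rfl⟩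
    have hj' := (exists_revPos_eq_iff hinj hdown (mach j) (r j')).1 ⟨j', hmach.symm, rfl⟩
    rw [hmach] at hpos hj hj'
    exact hinj j j' hmach (by omega)
  contiguous j hj := by
    obtain ⟨j', hmach, hr⟩ := (exists_revPos_eq_iff hinj hdown (mach j) (r j + 1)).2 (by omega)
    exact ⟨j', hmach, by rw [hmach, hr]; omega⟩

theorem pw_ofRevPos (hinj : ∀ j j', mach j = mach j' → r j = r j' → j = j')
    (hdown : ∀ j, ∀ l < r j, ∃ j', mach j' = mach j ∧ r j' = l) (V : Fin m → ℝ) (j : J) :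
    (ofRevPos mach r hinj hdown).pw V j = (r j + 1) / V (mach j) := by
  have hj := (exists_revPos_eq_iff hinj hdown (mach j) (r j)).1 ⟨j, rfl, rfl⟩
  change (((#{j' | mach j' = mach j} : ℕ) : ℝ) + 1 - ((#{j' | mach j' = mach j} - r j : ℕ) : ℝ))
    / V (mach j) = _
  rw [Nat.cast_sub hj.le]
  ring

end Schedule

theorem exists_slots_sortedWeights {m n : ℕ} (V : Fin m → ℝ) (hV : ∀ i, 0 < V i) (hm : 0 < m) :
    ∃ Q : Fin n → Fin m × Fin n, Function.Injective Q ∧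
      (∀ k : Fin n, (sortedWeights m n V).getD k 0 = slotWeight n V (Q k)) ∧
      ∀ k, ∀ l < ((Q k).2 : ℕ), ∃ k', (Q k').1 = (Q k).1 ∧ ((Q k').2 : ℕ) = l := by
  have hle : n ≤ m * n := Nat.le_mul_of_pos_left n hm
  let τ : Fin (m * n) ≃ Fin m × Fin n :=
    (Tuple.sort (slotWeight n V ∘ finProdFinEquiv.symm)).trans finProdFinEquiv.symm
  have hτ : Monotone (slotWeight n V ∘ τ) :=
    Tuple.monotone_sort (slotWeight n V ∘ finProdFinEquiv.symm)
  refine ⟨fun k => τ (Fin.castLE hle k), τ.injective.comp (Fin.castLE_injective hle),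
    fun k => ?_, fun k l hl => ?_⟩
  · rw [sortedWeights_eq_take, Multiset.sort_map_univ_eq_ofFn _ τ hτ,
      List.getD_eq_getElem _ _ (by simp [hle]), List.getElem_take]
    simp only [List.getElem_ofFn, Function.comp_apply]
    rfl
  · -- a slot nearer the end of the same machine weighs strictly less, so it is sorted earlier
    let q : Fin m × Fin n := ((τ (Fin.castLE hle k)).1, ⟨l, hl.trans (τ _).2.2⟩)
    have hlt : (slotWeight n V ∘ τ) (τ.symm q) < (slotWeight n V ∘ τ) (Fin.castLE hle k) := by
      simp only [Function.comp_apply, Equiv.apply_symm_apply, slotWeight, q]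
      gcongr
      exact hV _
    have hq : (τ.symm q : ℕ) < n := (Fin.lt_def.1 (hτ.reflect_lt hlt)).trans k.2
    exact ⟨⟨τ.symm q, hq⟩, by simp [q, show Fin.castLE hle ⟨τ.symm q, hq⟩ = τ.symm q from rfl]⟩

theorem exists_totalC_eq_sum_sortedWeights_mul {m n : ℕ} (p : Fin n → ℝ) (V : Fin m → ℝ)
    (hV : ∀ i, 0 < V i) (hm : 0 < m) :
    ∃ σ : Schedule (Fin n) m, σ.totalC p V =
      ∑ k ∈ range n, (sortedWeights m n V).getD k 0 * (sortedProcDesc p).getD k 0 := by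
  obtain ⟨Q, hQinj, hQweight, hQdown⟩ := exists_slots_sortedWeights (n := n) V hV hm
  let e : Fin n ≃ Fin n := Fin.revPerm.trans (Tuple.sort p)
  have hinj : ∀ j j', (Q (e.symm j)).1 = (Q (e.symm j')).1 →
      ((Q (e.symm j)).2 : ℕ) = (Q (e.symm j')).2 → j = j' := fun j j' h1 h2 =>
    e.symm.injective (hQinj (Prod.ext h1 (Fin.ext h2)))
  have hdown : ∀ j, ∀ l < ((Q (e.symm j)).2 : ℕ),
      ∃ j', (Q (e.symm j')).1 = (Q (e.symm j)).1 ∧ ((Q (e.symm j')).2 : ℕ) = l := fun j l hl => by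
    obtain ⟨k', hk'⟩ := hQdown _ l hl
    exact ⟨e k', by simpa using hk'⟩
  let σ := Schedule.ofRevPos _ _ hinj hdown
  refine ⟨σ, σ.totalC_eq_of_pairing e (fun k => ?_) (fun k => ?_)⟩
  · exact (sortedProcDesc_getD p k).symm
  · rw [Schedule.pw_ofRevPos, hQweight, slotWeight]
    simp

/-- The minimum of `Σ_j C_j` over all schedules of `n` jobs on `m`
uniform machines equals `Σ_{k=1}^n ω_(k)·p_(k)` (smallest positional weights paired with
largest processing times), and this minimum is attained by any schedule assigning the
job with the `k`-th largest processing time to a position of positional weight `ω_(k)`. -/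
theorem min_total_completion_eq_pairing
    {m n : ℕ} (p : Fin n → ℝ) (V : Fin m → ℝ)
    (hp : ∀ j, 0 < p j) (hV : ∀ i, 0 < V i) (hm : 0 < m) :
    (∃ σ : Schedule (Fin n) m, σ.totalC p V =
        ∑ k ∈ Finset.range n,
          (sortedWeights m n V).getD k 0 * (sortedProcDesc p).getD k 0) ∧
    (∀ σ : Schedule (Fin n) m,
        ∑ k ∈ Finset.range n,
          (sortedWeights m n V).getD k 0 * (sortedProcDesc p).getD k 0
          ≤ σ.totalC p V) ∧
    (∀ σ : Schedule (Fin n) m, ∀ e : Fin n ≃ Fin n,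
        (∀ k : Fin n, p (e k) = (sortedProcDesc p).getD k 0) →
        (∀ k : Fin n, σ.pw V (e k) = (sortedWeights m n V).getD k 0) →
        σ.totalC p V =
          ∑ k ∈ Finset.range n,
            (sortedWeights m n V).getD k 0 * (sortedProcDesc p).getD k 0) :=
  ⟨exists_totalC_eq_sum_sortedWeights_mul p V hV hm,
    sum_sortedWeights_mul_le_totalC p V fun j => (hp j).le,
    fun σ e hP hW => σ.totalC_eq_of_pairing e hP hW⟩
end

section
/- Let X = {x_1,…,x_n}, Y = {y_1,…,y_n}, Z = {z_1,…,z_n} be three collections of positive integers, let b be a positive integer with Σ_{x∈X} x + Σ_{y∈Y} y + Σ_{z∈Z} z = n·b, and define 3n jobs on n identical machines (all of speed 1) with processing times p_i = x_i, p_{n+i} = y_i + Σ_{x∈X} x, p_{2n+i} = z_i + Σ_{y∈Y} y + Σ_{x∈X} x for i = 1,…,n, and common due date D = b + Σ_{y∈Y} y + 2·Σ_{x∈X} x for every job. Then X ∪ Y ∪ Z can be partitioned into n disjoint triples A_1,…,A_n, each containing exactly one element from each of X, Y, and Z, with the three elements of each A_h summing to b, if and only if there exists a schedule σ of all 3n jobs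 on the n machines such that Σ_j C_j(σ) is minimal among all schedules of the 3n jobs and every job is on time, i.e., C_j(σ) ≤ D for all j. -/
set_option linter.unusedSectionVars false


/-- Processing times of the Numerical-3-Dimensional-Matching reduction: job `(0,i)` has
processing time `x_i`, job `(1,i)` has `y_i + Σ_x x`, and job `(2,i)` has
`z_i + Σ_y y + Σ_x x`. -/
noncomputable def procNDM (n : ℕ) (x y z : Fin n → ℕ) : Fin 3 × Fin n → ℝ := fun j =>
  if j.1 = 0 then ((x j.2 : ℕ) : ℝ)
  else if j.1 = 1 then ((y j.2 + ∑ i, x i : ℕ) : ℝ)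
  else ((z j.2 + ∑ i, y i + ∑ i, x i : ℕ) : ℝ)

namespace N3DM

open Finset

lemma fin3_cases (t : Fin 3) : t = 0 ∨ t = 1 ∨ t = 2 := by revert t; decide

lemma downclosed_eq_Icc (S : Finset ℕ) (h1 : ∀ k ∈ S, 1 ≤ k)
    (h2 : ∀ k ∈ S, 2 ≤ k → k - 1 ∈ S) : S = Finset.Icc 1 S.card := by
  have key : ∀ k, k ∈ S → ∀ a, 1 ≤ a → a ≤ k → a ∈ S := by
    intro k
    induction k with
    | zero => intro _ a h1a h2a; exact absurd (h1a.trans h2a) (by omega)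
    | succ k ih =>
      intro hk a h1a h2a
      rcases eq_or_lt_of_le h2a with h | h
      · rwa [h]
      · have hk' : k ∈ S := by
          have := h2 (k+1) hk (by omega)
          simpa using this
        exact ih hk' a h1a (by omega)
  have hsub : S ⊆ Finset.Icc 1 S.card := by
    intro k hk
    have hss : Finset.Icc 1 k ⊆ S := fun a ha => by
      rw [Finset.mem_Icc] at ha; exact key k hk a ha.1 ha.2
    have hcard := Finset.card_le_card hss
    rw [Nat.card_Icc] at hcard
    exact Finset.mem_Icc.2 ⟨h1 k hk, by omega⟩
  exact Finset.eq_of_subset_of_card_le hsub (by rw [Nat.card_Icc]; omega)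

variable {J : Type} {m : ℕ} [Fintype J]

lemma image_pos_fiber (σ : Schedule J m) (i : Fin m) :
    ((Finset.univ.filter fun j => σ.mach j = i).image σ.pos) = Finset.Icc 1 (σ.load i) := by
  have hinj : Set.InjOn σ.pos (Finset.univ.filter fun j => σ.mach j = i) := by
    intro a ha b hb hab
    simp only [coe_filter, Set.mem_setOf_eq, mem_univ, true_and] at ha hb
    exact σ.inj a b (ha.trans hb.symm) hab
  have hcard : ((Finset.univ.filter fun j => σ.mach j = i).image σ.pos).card = σ.load i := by
    rw [Finset.card_image_of_injOn hinj]; rfl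
  rw [← hcard]
  apply downclosed_eq_Icc
  · intro k hk; rcases Finset.mem_image.1 hk with ⟨j, _, rfl⟩; exact σ.pos_pos j
  · intro k hk h2k
    rcases Finset.mem_image.1 hk with ⟨j, hj, rfl⟩
    rcases σ.contiguous j h2k with ⟨j', hm, hp⟩
    refine Finset.mem_image.2 ⟨j', ?_, hp⟩
    simp only [mem_filter, mem_univ, true_and] at hj ⊢
    rw [hm, hj]

lemma pos_le_load (σ : Schedule J m) (j : J) : σ.pos j ≤ σ.load (σ.mach j) := by
  have h : σ.pos j ∈ Finset.Icc 1 (σ.load (σ.mach j)) := by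
    rw [← image_pos_fiber σ (σ.mach j)]
    exact Finset.mem_image_of_mem _ (by simp)
  exact (Finset.mem_Icc.1 h).2

lemma exists_pos_eq (σ : Schedule J m) (i : Fin m) (t : ℕ) (h1 : 1 ≤ t)
    (h2 : t ≤ σ.load i) : ∃ j, σ.mach j = i ∧ σ.pos j = t := by
  have h : t ∈ (Finset.univ.filter fun j => σ.mach j = i).image σ.pos := by
    rw [image_pos_fiber]; exact Finset.mem_Icc.2 ⟨h1, h2⟩
  rcases Finset.mem_image.1 h with ⟨j, hj, hp⟩
  simp only [mem_filter, mem_univ, true_and] at hj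
  exact ⟨j, hj, hp⟩

lemma card_tail (σ : Schedule J m) (j' : J) :
    (Finset.univ.filter fun j => σ.mach j' = σ.mach j ∧ σ.pos j' ≤ σ.pos j).card
      = σ.load (σ.mach j') + 1 - σ.pos j' := by
  have himg : ((Finset.univ.filter fun j => σ.mach j' = σ.mach j ∧ σ.pos j' ≤ σ.pos j).image σ.pos)
      = Finset.Icc (σ.pos j') (σ.load (σ.mach j')) := by
    ext k
    simp only [mem_image, mem_filter, mem_univ, true_and, mem_Icc]
    constructor
    · rintro ⟨j, ⟨hm, ht⟩, rfl⟩
      exact ⟨ht, by rw [hm]; exact pos_le_load σ j⟩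
    · rintro ⟨hk1, hk2⟩
      rcases exists_pos_eq σ (σ.mach j') k (le_trans (σ.pos_pos j') hk1) hk2 with ⟨j, hm, hp⟩
      exact ⟨j, ⟨hm.symm, by omega⟩, hp⟩
  have hinj : Set.InjOn σ.pos (Finset.univ.filter fun j => σ.mach j' = σ.mach j ∧ σ.pos j' ≤ σ.pos j) := by
    intro a ha b hb hab
    simp only [coe_filter, Set.mem_setOf_eq, mem_univ, true_and] at ha hb
    exact σ.inj a b (ha.1.symm.trans hb.1) hab
  rw [← Finset.card_image_of_injOn hinj, himg, Nat.card_Icc]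

lemma totalC_eq (σ : Schedule J m) (p : J → ℝ) :
    σ.totalC p (fun _ => 1)
      = ∑ j, ((σ.load (σ.mach j) : ℝ) + 1 - (σ.pos j : ℝ)) * p j := by
  unfold Schedule.totalC Schedule.compl
  simp only [div_one]
  calc (∑ j, ∑ j' ∈ Finset.univ.filter
        (fun j' => σ.mach j' = σ.mach j ∧ σ.pos j' ≤ σ.pos j), p j')
      = ∑ j, ∑ j', if σ.mach j' = σ.mach j ∧ σ.pos j' ≤ σ.pos j then p j' else 0 := by
        simp [Finset.sum_filter]
    _ = ∑ j', ∑ j, if σ.mach j' = σ.mach j ∧ σ.pos j' ≤ σ.pos j then p j' else 0 :=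
        Finset.sum_comm
    _ = ∑ j', ((σ.load (σ.mach j') : ℝ) + 1 - (σ.pos j' : ℝ)) * p j' := by
        refine Finset.sum_congr rfl fun j' _ => ?_
        rw [← Finset.sum_filter, Finset.sum_const, card_tail σ j', nsmul_eq_mul]
        have h1 := pos_le_load σ j'
        have : ((σ.load (σ.mach j') + 1 - σ.pos j' : ℕ) : ℝ)
            = (σ.load (σ.mach j') : ℝ) + 1 - (σ.pos j' : ℝ) := by
          push_cast [Nat.cast_sub (by omega : σ.pos j' ≤ σ.load (σ.mach j') + 1)]
          ring
        rw [this]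




variable {J : Type} {m : ℕ} [Fintype J] [DecidableEq J]

def S2 (σ : Schedule J m) : Finset J :=
  Finset.univ.filter fun j => σ.pos j + 1 ≤ σ.load (σ.mach j)

def S3 (σ : Schedule J m) : Finset J :=
  Finset.univ.filter fun j => σ.pos j + 2 ≤ σ.load (σ.mach j)

lemma weighted_pointwise (σ : Schedule J m) (p : J → ℝ) (hp : ∀ j, 0 ≤ p j) (j : J) :
    p j + ((if σ.pos j + 1 ≤ σ.load (σ.mach j) then p j else 0)
        + (if σ.pos j + 2 ≤ σ.load (σ.mach j) then p j else 0))
      ≤ ((σ.load (σ.mach j) : ℝ) + 1 - (σ.pos j : ℝ)) * p j := by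
  have h1 := σ.pos_pos j
  have h2 := pos_le_load σ j
  by_cases hc3 : σ.pos j + 2 ≤ σ.load (σ.mach j)
  · have hc2 : σ.pos j + 1 ≤ σ.load (σ.mach j) := by omega
    rw [if_pos hc2, if_pos hc3]
    have hw : (3:ℝ) ≤ (σ.load (σ.mach j) : ℝ) + 1 - (σ.pos j : ℝ) := by
      have : (σ.pos j : ℝ) + 2 ≤ (σ.load (σ.mach j) : ℝ) := by exact_mod_cast hc3
      linarith
    nlinarith [hp j]
  · by_cases hc2 : σ.pos j + 1 ≤ σ.load (σ.mach j)
    · rw [if_pos hc2, if_neg hc3]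
      have hw : (2:ℝ) ≤ (σ.load (σ.mach j) : ℝ) + 1 - (σ.pos j : ℝ) := by
        have : (σ.pos j : ℝ) + 1 ≤ (σ.load (σ.mach j) : ℝ) := by exact_mod_cast hc2
        linarith
      nlinarith [hp j]
    · rw [if_neg hc2, if_neg hc3]
      have hw : (1:ℝ) ≤ (σ.load (σ.mach j) : ℝ) + 1 - (σ.pos j : ℝ) := by
        have : (σ.pos j : ℝ) ≤ (σ.load (σ.mach j) : ℝ) := by exact_mod_cast h2
        linarith
      nlinarith [hp j]

lemma sum_split (σ : Schedule J m) (p : J → ℝ) :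
    (∑ j, (p j + ((if σ.pos j + 1 ≤ σ.load (σ.mach j) then p j else 0)
        + (if σ.pos j + 2 ≤ σ.load (σ.mach j) then p j else 0))))
      = ∑ j, p j + (∑ j ∈ S2 σ, p j + ∑ j ∈ S3 σ, p j) := by
  rw [Finset.sum_add_distrib, Finset.sum_add_distrib, S2, S3,
    Finset.sum_filter, Finset.sum_filter]

/-- generic exchange bound -/
lemma sum_lower (p : J → ℝ) (S T : Finset J) (c : ℝ) (hc : 0 ≤ c)
    (hT : ∀ j ∈ T, p j ≤ c) (hT' : ∀ j, j ∉ T → c + 1 ≤ p j)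
    (hcard : T.card ≤ S.card) :
    ∑ j ∈ T, p j + ((S \ T).card : ℝ) ≤ ∑ j ∈ S, p j := by
  have hsplitS : ∑ j ∈ S ∩ T, p j + ∑ j ∈ S \ T, p j = ∑ j ∈ S, p j :=
    Finset.sum_inter_add_sum_sdiff S T p
  have hsplitT : ∑ j ∈ T ∩ S, p j + ∑ j ∈ T \ S, p j = ∑ j ∈ T, p j :=
    Finset.sum_inter_add_sum_sdiff T S p
  have hcards : (T \ S).card ≤ (S \ T).card := by
    have h1 : (T \ S).card + (T ∩ S).card = T.card := Finset.card_sdiff_add_card_inter T S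
    have h2 : (S \ T).card + (S ∩ T).card = S.card := Finset.card_sdiff_add_card_inter S T
    rw [Finset.inter_comm] at h1
    omega
  have hTS : ∑ j ∈ T \ S, p j ≤ ((T \ S).card : ℝ) * c := by
    have := Finset.sum_le_card_nsmul (T \ S) p c
      (fun j hj => hT j (Finset.mem_sdiff.1 hj).1)
    simpa [nsmul_eq_mul] using this
  have hST : ((S \ T).card : ℝ) * (c + 1) ≤ ∑ j ∈ S \ T, p j := by
    have := Finset.card_nsmul_le_sum (S \ T) p (c + 1)
      (fun j hj => hT' j (Finset.mem_sdiff.1 hj).2)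
    simpa [nsmul_eq_mul, mul_add] using this
  have hinter : ∑ j ∈ T ∩ S, p j = ∑ j ∈ S ∩ T, p j := by rw [Finset.inter_comm]
  have hcc : ((T \ S).card : ℝ) ≤ ((S \ T).card : ℝ) := by exact_mod_cast hcards
  nlinarith [hcc, hc]

lemma card_S2_ge {n : ℕ} (σ : Schedule (Fin 3 × Fin n) n) : 2 * n ≤ (S2 σ).card := by
  have hcompl : (Finset.univ.filter fun j : Fin 3 × Fin n =>
      ¬ (σ.pos j + 1 ≤ σ.load (σ.mach j))).card ≤ n := by
    have := Finset.card_le_card_of_injOn (f := σ.mach)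
      (s := Finset.univ.filter fun j : Fin 3 × Fin n => ¬ (σ.pos j + 1 ≤ σ.load (σ.mach j)))
      (t := Finset.univ) (fun _ _ => Finset.mem_univ _) ?_
    · simpa using this
    · intro a ha b hb hab
      simp only [coe_filter, Set.mem_setOf_eq, mem_univ, true_and] at ha hb
      have h2a := pos_le_load σ a
      have h2b := pos_le_load σ b
      refine σ.inj a b hab ?_
      rw [hab] at h2a ha
      omega
  have htotal := Finset.card_filter_add_card_filter_not
    (s := (Finset.univ : Finset (Fin 3 × Fin n)))
    (p := fun j => σ.pos j + 1 ≤ σ.load (σ.mach j))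
  have huniv : (Finset.univ : Finset (Fin 3 × Fin n)).card = 3 * n := by simp
  rw [S2]
  omega

lemma card_S3_ge {n : ℕ} (σ : Schedule (Fin 3 × Fin n) n) : n ≤ (S3 σ).card := by
  have hcompl : (Finset.univ.filter fun j : Fin 3 × Fin n =>
      ¬ (σ.pos j + 2 ≤ σ.load (σ.mach j))).card ≤ 2 * n := by
    have := Finset.card_le_card_of_injOn
      (f := fun j => (σ.mach j, decide (σ.pos j = σ.load (σ.mach j))))
      (s := Finset.univ.filter fun j : Fin 3 × Fin n => ¬ (σ.pos j + 2 ≤ σ.load (σ.mach j)))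
      (t := Finset.univ) (fun _ _ => Finset.mem_univ _) ?_
    · simpa [Nat.mul_comm] using this
    · intro a ha b hb hab
      simp only [coe_filter, Set.mem_setOf_eq, mem_univ, true_and] at ha hb
      rw [Prod.mk.injEq] at hab
      obtain ⟨hm, hd⟩ := hab
      have hd' : (σ.pos a = σ.load (σ.mach a)) ↔ (σ.pos b = σ.load (σ.mach b)) :=
        decide_eq_decide.mp hd
      have h2a := pos_le_load σ a
      have h2b := pos_le_load σ b
      refine σ.inj a b hm ?_
      rw [hm] at h2a ha hd'
      omega
  have htotal := Finset.card_filter_add_card_filter_not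
    (s := (Finset.univ : Finset (Fin 3 × Fin n)))
    (p := fun j => σ.pos j + 2 ≤ σ.load (σ.mach j))
  have huniv : (Finset.univ : Finset (Fin 3 × Fin n)).card = 3 * n := by simp
  rw [S3]
  omega





def T0 (n : ℕ) : Finset (Fin 3 × Fin n) := {(0 : Fin 3)} ×ˢ Finset.univ

def T01 (n : ℕ) : Finset (Fin 3 × Fin n) := ({0, 1} : Finset (Fin 3)) ×ˢ Finset.univ

lemma mem_T0 {n : ℕ} (j : Fin 3 × Fin n) : j ∈ T0 n ↔ j.1 = 0 := by
  obtain ⟨t, i⟩ := j; simp [T0, Finset.mem_product, eq_comm]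

lemma mem_T01 {n : ℕ} (j : Fin 3 × Fin n) : j ∈ T01 n ↔ j.1 = 0 ∨ j.1 = 1 := by
  obtain ⟨t, i⟩ := j; simp [T01, Finset.mem_product]

lemma card_T0 (n : ℕ) : (T0 n).card = n := by simp [T0]

lemma card_T01 (n : ℕ) : (T01 n).card = 2 * n := by
  rw [T01, Finset.card_product]
  have : ({0, 1} : Finset (Fin 3)).card = 2 := by decide
  simp [this]

lemma sum_T0 {n : ℕ} (f : Fin 3 × Fin n → ℝ) : ∑ j ∈ T0 n, f j = ∑ i, f (0, i) := by
  rw [T0, Finset.sum_product]; simp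

lemma sum_T01 {n : ℕ} (f : Fin 3 × Fin n → ℝ) :
    ∑ j ∈ T01 n, f j = ∑ i, f (0, i) + ∑ i, f (1, i) := by
  rw [T01, Finset.sum_product, Finset.sum_pair (by decide : (0 : Fin 3) ≠ 1)]

variable {n : ℕ} {x y z : Fin n → ℕ}

lemma p_eval0 (i : Fin n) : procNDM n x y z (0, i) = (x i : ℝ) := by
  simp [procNDM]

lemma p_eval1 (i : Fin n) :
    procNDM n x y z (1, i) = (y i : ℝ) + ∑ i', (x i' : ℝ) := by
  simp [procNDM]

lemma p_eval2 (i : Fin n) :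
    procNDM n x y z (2, i) = (z i : ℝ) + ∑ i', (y i' : ℝ) + ∑ i', (x i' : ℝ) := by
  simp [procNDM]

lemma sum_le_sumX (x : Fin n → ℕ) (i : Fin n) : (x i : ℝ) ≤ ∑ i', (x i' : ℝ) :=
  Finset.single_le_sum (f := fun i' => (x i' : ℝ)) (fun i' _ => by positivity) (Finset.mem_univ i)

lemma sumX_nonneg (x : Fin n → ℕ) : (0:ℝ) ≤ ∑ i', (x i' : ℝ) := by positivity

lemma p_nonneg (j : Fin 3 × Fin n) : 0 ≤ procNDM n x y z j := by
  obtain ⟨t, i⟩ := j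
  rcases fin3_cases t with h | h | h <;> subst h <;>
    [rw [p_eval0]; rw [p_eval1]; rw [p_eval2]] <;> positivity

lemma p_pos (hx : ∀ i, 0 < x i) (hy : ∀ i, 0 < y i) (hz : ∀ i, 0 < z i)
    (j : Fin 3 × Fin n) : 0 < procNDM n x y z j := by
  obtain ⟨t, i⟩ := j
  have hxi : (1:ℝ) ≤ x i := by exact_mod_cast hx i
  have hyi : (1:ℝ) ≤ y i := by exact_mod_cast hy i
  have hzi : (1:ℝ) ≤ z i := by exact_mod_cast hz i
  have h1 := sumX_nonneg x
  have h2 := sumX_nonneg y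
  rcases fin3_cases t with h | h | h <;> subst h <;>
    [rw [p_eval0]; rw [p_eval1]; rw [p_eval2]] <;> linarith

lemma p_le_T0 (j : Fin 3 × Fin n) (hj : j ∈ T0 n) :
    procNDM n x y z j ≤ ∑ i', (x i' : ℝ) := by
  obtain ⟨t, i⟩ := j
  rw [mem_T0] at hj
  simp only at hj
  subst hj
  rw [p_eval0]; exact sum_le_sumX x i

lemma p_ge_T0 (hy : ∀ i, 0 < y i) (hz : ∀ i, 0 < z i) (j : Fin 3 × Fin n)
    (hj : j ∉ T0 n) : (∑ i', (x i' : ℝ)) + 1 ≤ procNDM n x y z j := by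
  obtain ⟨t, i⟩ := j
  rw [mem_T0] at hj
  simp only at hj
  have hyi : (1:ℝ) ≤ y i := by exact_mod_cast hy i
  have hzi : (1:ℝ) ≤ z i := by exact_mod_cast hz i
  have h2 := sumX_nonneg y
  rcases fin3_cases t with h | h | h
  · exact absurd h hj
  · subst h; rw [p_eval1]; linarith
  · subst h; rw [p_eval2]; linarith

lemma p_le_T01 (j : Fin 3 × Fin n) (hj : j ∈ T01 n) :
    procNDM n x y z j ≤ (∑ i', (x i' : ℝ)) + ∑ i', (y i' : ℝ) := by
  obtain ⟨t, i⟩ := j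
  rw [mem_T01] at hj
  simp only at hj
  have h1 := sumX_nonneg x
  have h2 := sumX_nonneg y
  rcases hj with h | h <;> subst h
  · rw [p_eval0]; have := sum_le_sumX x i; linarith
  · rw [p_eval1]; have := sum_le_sumX y i; linarith

lemma p_ge_T01 (hz : ∀ i, 0 < z i) (j : Fin 3 × Fin n) (hj : j ∉ T01 n) :
    ((∑ i', (x i' : ℝ)) + ∑ i', (y i' : ℝ)) + 1 ≤ procNDM n x y z j := by
  obtain ⟨t, i⟩ := j
  rw [mem_T01] at hj
  simp only at hj
  push_neg at hj
  have hzi : (1:ℝ) ≤ z i := by exact_mod_cast hz i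
  rcases fin3_cases t with h | h | h
  · exact absurd h hj.1
  · exact absurd h hj.2
  · subst h; rw [p_eval2]; linarith

/-- the optimal total completion time -/
noncomputable def Mstar (n : ℕ) (x y z : Fin n → ℕ) : ℝ :=
  ∑ j, procNDM n x y z j
    + (∑ j ∈ T01 n, procNDM n x y z j + ∑ j ∈ T0 n, procNDM n x y z j)

/-- refined lower bound -/
lemma lb' (hx : ∀ i, 0 < x i) (hy : ∀ i, 0 < y i) (hz : ∀ i, 0 < z i)
    (τ : Schedule (Fin 3 × Fin n) n) :
    Mstar n x y z + (((S2 τ \ T01 n).card : ℝ) + ((S3 τ \ T0 n).card : ℝ))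
      ≤ τ.totalC (procNDM n x y z) (fun _ => 1) := by
  rw [totalC_eq]
  have step1 : ∑ j, procNDM n x y z j
      + (∑ j ∈ S2 τ, procNDM n x y z j + ∑ j ∈ S3 τ, procNDM n x y z j)
      ≤ ∑ j, ((τ.load (τ.mach j) : ℝ) + 1 - (τ.pos j : ℝ)) * procNDM n x y z j := by
    rw [← sum_split]
    exact Finset.sum_le_sum fun j _ => weighted_pointwise τ _ (fun j => p_nonneg j) j
  have step2 : ∑ j ∈ T01 n, procNDM n x y z j + ((S2 τ \ T01 n).card : ℝ)
      ≤ ∑ j ∈ S2 τ, procNDM n x y z j := by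
    refine sum_lower _ _ _ ((∑ i', (x i' : ℝ)) + ∑ i', (y i' : ℝ))
      (by positivity) (fun j hj => p_le_T01 j hj) (fun j hj => p_ge_T01 hz j hj) ?_
    rw [card_T01]; exact card_S2_ge τ
  have step3 : ∑ j ∈ T0 n, procNDM n x y z j + ((S3 τ \ T0 n).card : ℝ)
      ≤ ∑ j ∈ S3 τ, procNDM n x y z j := by
    refine sum_lower _ _ _ (∑ i', (x i' : ℝ))
      (by positivity) (fun j hj => p_le_T0 j hj) (fun j hj => p_ge_T0 hy hz j hj) ?_
    rw [card_T0]; exact card_S3_ge τ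
  rw [Mstar]
  linarith

lemma lb (hx : ∀ i, 0 < x i) (hy : ∀ i, 0 < y i) (hz : ∀ i, 0 < z i)
    (τ : Schedule (Fin 3 × Fin n) n) :
    Mstar n x y z ≤ τ.totalC (procNDM n x y z) (fun _ => 1) := by
  have := lb' hx hy hz τ
  have h1 : (0:ℝ) ≤ ((S2 τ \ T01 n).card : ℝ) := by positivity
  have h2 : (0:ℝ) ≤ ((S3 τ \ T0 n).card : ℝ) := by positivity
  linarith



def sched (n : ℕ) (π ρ : Equiv.Perm (Fin n)) : Schedule (Fin 3 × Fin n) n where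
  mach j := if j.1 = 0 then j.2 else if j.1 = 1 then π.symm j.2 else ρ.symm j.2
  pos j := j.1.1 + 1
  pos_pos j := Nat.le_add_left 1 j.1.1
  inj := by
    rintro ⟨t, i⟩ ⟨t', i'⟩ hm hp
    simp only at hm hp
    have ht : t = t' := Fin.ext (by omega)
    subst ht
    rcases fin3_cases t with h | h | h <;> subst h <;> simp_all
  contiguous := by
    rintro ⟨t, i⟩ h
    rcases fin3_cases t with ht | ht | ht <;> subst ht
    · simp at h
    · exact ⟨(0, π.symm i), by simp, by simp⟩
    · refine ⟨(1, π (ρ.symm i)), by simp, by simp⟩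

variable {n : ℕ} {x y z : Fin n → ℕ}

lemma compl_sched_0 (π ρ : Equiv.Perm (Fin n)) (i : Fin n) :
    (sched n π ρ).compl (procNDM n x y z) (fun _ => 1) (0, i) = (x i : ℝ) := by
  unfold Schedule.compl
  simp only [div_one]
  have hfil : (Finset.univ.filter fun j' : Fin 3 × Fin n =>
      (sched n π ρ).mach j' = (sched n π ρ).mach (0, i)
        ∧ (sched n π ρ).pos j' ≤ (sched n π ρ).pos (0, i)) = {((0 : Fin 3), i)} := by
    ext ⟨t, a⟩
    rcases fin3_cases t with h | h | h <;> subst h <;>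
      simp [sched, Prod.ext_iff]
  rw [hfil, Finset.sum_singleton, p_eval0]

lemma compl_sched_1 (π ρ : Equiv.Perm (Fin n)) (i : Fin n) :
    (sched n π ρ).compl (procNDM n x y z) (fun _ => 1) (1, i)
      = (x (π.symm i) : ℝ) + ((y i : ℝ) + ∑ i', (x i' : ℝ)) := by
  unfold Schedule.compl
  simp only [div_one]
  have hfil : (Finset.univ.filter fun j' : Fin 3 × Fin n =>
      (sched n π ρ).mach j' = (sched n π ρ).mach (1, i)
        ∧ (sched n π ρ).pos j' ≤ (sched n π ρ).pos (1, i))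
      = {((0 : Fin 3), π.symm i), ((1 : Fin 3), i)} := by
    ext ⟨t, a⟩
    rcases fin3_cases t with h | h | h <;> subst h <;>
      simp [sched, Prod.ext_iff]
  rw [hfil, Finset.sum_pair (by simp : ((0 : Fin 3), π.symm i) ≠ ((1 : Fin 3), i)),
    p_eval0, p_eval1]

lemma compl_sched_2 (π ρ : Equiv.Perm (Fin n)) (i : Fin n) :
    (sched n π ρ).compl (procNDM n x y z) (fun _ => 1) (2, i)
      = ((x (ρ.symm i) : ℝ) + ((y (π (ρ.symm i)) : ℝ) + ∑ i', (x i' : ℝ)))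
        + ((z i : ℝ) + ∑ i', (y i' : ℝ) + ∑ i', (x i' : ℝ)) := by
  unfold Schedule.compl
  simp only [div_one]
  have hfil : (Finset.univ.filter fun j' : Fin 3 × Fin n =>
      (sched n π ρ).mach j' = (sched n π ρ).mach (2, i)
        ∧ (sched n π ρ).pos j' ≤ (sched n π ρ).pos (2, i))
      = {((0 : Fin 3), ρ.symm i), ((1 : Fin 3), π (ρ.symm i)), ((2 : Fin 3), i)} := by
    ext ⟨t, a⟩
    rcases fin3_cases t with h | h | h <;> subst h <;>
      simp [sched, Prod.ext_iff, Equiv.symm_apply_eq]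
  rw [hfil]
  rw [Finset.sum_insert (by simp), Finset.sum_insert (by simp), Finset.sum_singleton,
    p_eval0, p_eval1, p_eval2]
  ring

lemma totalC_sched (π ρ : Equiv.Perm (Fin n)) :
    (sched n π ρ).totalC (procNDM n x y z) (fun _ => 1) = Mstar n x y z := by
  unfold Schedule.totalC
  rw [Fintype.sum_prod_type, Fin.sum_univ_three]
  simp only [compl_sched_0 π ρ, compl_sched_1 π ρ, compl_sched_2 π ρ]
  rw [Mstar, Fintype.sum_prod_type, Fin.sum_univ_three, sum_T01, sum_T0]
  simp only [p_eval0, p_eval1, p_eval2]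
  rw [Finset.sum_add_distrib, Finset.sum_add_distrib, Finset.sum_add_distrib,
    Finset.sum_add_distrib, Finset.sum_add_distrib, Finset.sum_add_distrib,
    Equiv.sum_comp π.symm (fun i' => (x i' : ℝ)),
    Equiv.sum_comp ρ.symm (fun i' => (x i' : ℝ))]
  have h3 : (∑ i', (y (π (ρ.symm i')) : ℝ)) = ∑ i', (y i' : ℝ) :=
    Fintype.sum_equiv (ρ.symm.trans π) _ (fun i' => (y i' : ℝ)) (fun i' => rfl)
  rw [h3]
  ring
end N3DM
open N3DM in
/-- (Numerical 3-Dimensional Matching reduction.) `X ∪ Y ∪ Z` can be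
partitioned into `n` triples, one element from each of `X`, `Y`, `Z`, each summing to
`b`, iff there is a schedule of the `3n` jobs on `n` identical machines minimizing
`Σ_j C_j` in which every job completes by the common due date
`D = b + Σ_y y + 2·Σ_x x`. -/
theorem num3DM_iff_optimal_schedule_onTime
    (n : ℕ) (x y z : Fin n → ℕ) (b : ℕ)
    (hx : ∀ i, 0 < x i) (hy : ∀ i, 0 < y i) (hz : ∀ i, 0 < z i) (hb : 0 < b)
    (hsum : ∑ i, x i + ∑ i, y i + ∑ i, z i = n * b) :
    (∃ π ρ : Equiv.Perm (Fin n), ∀ h : Fin n, x h + y (π h) + z (ρ h) = b) ↔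
    (∃ σ : Schedule (Fin 3 × Fin n) n,
        (∀ τ : Schedule (Fin 3 × Fin n) n,
            σ.totalC (procNDM n x y z) (fun _ => 1)
              ≤ τ.totalC (procNDM n x y z) (fun _ => 1)) ∧
        ∀ j, σ.compl (procNDM n x y z) (fun _ => 1) j
              ≤ ((b + ∑ i, y i + 2 * ∑ i, x i : ℕ) : ℝ)) := by
  have hD : ((b + ∑ i, y i + 2 * ∑ i, x i : ℕ) : ℝ)
      = (b:ℝ) + (∑ i', (y i' : ℝ)) + 2 * ∑ i', (x i' : ℝ) := by push_cast; ring
  have hX := sumX_nonneg x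
  have hY := sumX_nonneg y
  have hbb : (1:ℝ) ≤ (b:ℝ) := by exact_mod_cast hb
  constructor
  · rintro ⟨π, ρ, hmatch⟩
    refine ⟨sched n π ρ, fun τ => ?_, ?_⟩
    · rw [totalC_sched]
      exact lb hx hy hz τ
    · rintro ⟨t, i⟩
      rcases fin3_cases t with h | h | h <;> subst h
      · rw [compl_sched_0, hD]
        have := sum_le_sumX x i
        linarith
      · rw [compl_sched_1, hD]
        have h1 := sum_le_sumX x (π.symm i)
        have h2 := sum_le_sumX y i
        linarith
      · rw [compl_sched_2, hD]
        have hm := hmatch (ρ.symm i)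
        rw [Equiv.apply_symm_apply] at hm
        have hm' : (x (ρ.symm i) : ℝ) + (y (π (ρ.symm i)) : ℝ) + (z i : ℝ) = (b : ℝ) := by
          exact_mod_cast hm
        linarith
  · rintro ⟨σ, hopt, hdl⟩
    have hub : σ.totalC (procNDM n x y z) (fun _ => 1) ≤ Mstar n x y z := by
      have h := hopt (sched n 1 1)
      rwa [totalC_sched] at h
    have hlow := lb' hx hy hz σ
    have hc2 : ((S2 σ \ T01 n).card : ℝ) = 0 := by
      have h1 : (0:ℝ) ≤ ((S2 σ \ T01 n).card : ℝ) := by positivity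
      have h2 : (0:ℝ) ≤ ((S3 σ \ T0 n).card : ℝ) := by positivity
      linarith
    have hc3 : ((S3 σ \ T0 n).card : ℝ) = 0 := by
      have h1 : (0:ℝ) ≤ ((S2 σ \ T01 n).card : ℝ) := by positivity
      have h2 : (0:ℝ) ≤ ((S3 σ \ T0 n).card : ℝ) := by positivity
      linarith
    have hS2 : S2 σ = T01 n := by
      refine Finset.eq_of_subset_of_card_le
        (Finset.sdiff_eq_empty_iff_subset.1 (Finset.card_eq_zero.1 (by exact_mod_cast hc2))) ?_
      rw [card_T01]; exact card_S2_ge σ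
    have hS3 : S3 σ = T0 n := by
      refine Finset.eq_of_subset_of_card_le
        (Finset.sdiff_eq_empty_iff_subset.1 (Finset.card_eq_zero.1 (by exact_mod_cast hc3))) ?_
      rw [card_T0]; exact card_S3_ge σ
    have htotC : σ.totalC (procNDM n x y z) (fun _ => 1) = Mstar n x y z :=
      le_antisymm hub (lb hx hy hz σ)
    -- pointwise equality of the weighted sum
    have hsum_eq : (∑ j, (procNDM n x y z j
          + ((if σ.pos j + 1 ≤ σ.load (σ.mach j) then procNDM n x y z j else 0)
            + (if σ.pos j + 2 ≤ σ.load (σ.mach j) then procNDM n x y z j else 0))))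
        = ∑ j, ((σ.load (σ.mach j) : ℝ) + 1 - (σ.pos j : ℝ)) * procNDM n x y z j := by
      rw [sum_split σ (procNDM n x y z), hS2, hS3, ← totalC_eq, htotC, Mstar]
    have hw3 : ∀ j, σ.load (σ.mach j) ≤ σ.pos j + 2 := by
      by_contra hcon
      push_neg at hcon
      obtain ⟨j0, hj0⟩ := hcon
      have hlt : (∑ j, (procNDM n x y z j
            + ((if σ.pos j + 1 ≤ σ.load (σ.mach j) then procNDM n x y z j else 0)
              + (if σ.pos j + 2 ≤ σ.load (σ.mach j) then procNDM n x y z j else 0))))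
          < ∑ j, ((σ.load (σ.mach j) : ℝ) + 1 - (σ.pos j : ℝ)) * procNDM n x y z j := by
        refine Finset.sum_lt_sum
          (fun j _ => weighted_pointwise σ _ (fun j => p_nonneg j) j)
          ⟨j0, Finset.mem_univ j0, ?_⟩
        have hc2' : σ.pos j0 + 1 ≤ σ.load (σ.mach j0) := by omega
        have hc3' : σ.pos j0 + 2 ≤ σ.load (σ.mach j0) := by omega
        rw [if_pos hc2', if_pos hc3']
        have hpp := p_pos hx hy hz j0
        have hw : (4:ℝ) ≤ (σ.load (σ.mach j0) : ℝ) + 1 - (σ.pos j0 : ℝ) := by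
          have : (σ.pos j0 : ℝ) + 3 ≤ (σ.load (σ.mach j0) : ℝ) := by exact_mod_cast hj0
          linarith
        nlinarith
      exact absurd hsum_eq (ne_of_lt hlt)
    -- all loads equal 3
    have hload : ∀ i', σ.load i' = 3 := by
      have hcards := Finset.card_eq_sum_card_fiberwise
        (f := σ.mach) (s := Finset.univ) (t := Finset.univ)
        (fun (j : Fin 3 × Fin n) _ => Finset.mem_univ (σ.mach j))
      have hcardu : (Finset.univ : Finset (Fin 3 × Fin n)).card = 3 * n := by simp
      have hsumload : ∑ i', σ.load i' = 3 * n := by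
        unfold Schedule.load
        rw [← hcards, hcardu]
      have hle : ∀ i', σ.load i' ≤ 3 := by
        intro i'
        by_cases h0 : σ.load i' = 0
        · omega
        · obtain ⟨j, hjm, hjp⟩ := exists_pos_eq σ i' 1 le_rfl (by omega)
          have := hw3 j
          rw [hjm, hjp] at this
          omega
      intro i'
      by_contra hne
      have hlt : ∑ i'', σ.load i'' < ∑ _i'' : Fin n, 3 :=
        Finset.sum_lt_sum (fun i'' _ => hle i'')
          ⟨i', Finset.mem_univ i', lt_of_le_of_ne (hle i') hne⟩
      rw [Finset.sum_const, Finset.card_univ, Fintype.card_fin, smul_eq_mul] at hlt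
      omega
    -- position determines job type
    have htype : ∀ j : Fin 3 × Fin n, σ.pos j = (j.1 : ℕ) + 1 := by
      intro j
      have h1 := σ.pos_pos j
      have h2 := pos_le_load σ j
      rw [hload] at h2
      have e3 : σ.pos j + 2 ≤ 3 ↔ j.1 = 0 := by
        have : j ∈ S3 σ ↔ j ∈ T0 n := by rw [hS3]
        simpa [S3, mem_T0, hload] using this
      have e2 : σ.pos j + 1 ≤ 3 ↔ (j.1 = 0 ∨ j.1 = 1) := by
        have : j ∈ S2 σ ↔ j ∈ T01 n := by rw [hS2]
        simpa [S2, mem_T01, hload] using this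
      rcases fin3_cases j.1 with h | h | h <;> rw [h]
      · have := e3.2 h
        simp only [Fin.val_zero]
        omega
      · have hne3 : ¬ (σ.pos j + 2 ≤ 3) := fun hh => by
          rw [h] at e3; simpa using e3.1 hh
        have := e2.2 (Or.inr h)
        simp only [Fin.val_one]
        omega
      · have hne2 : ¬ (σ.pos j + 1 ≤ 3) := fun hh => by
          rw [h] at e2; simpa using e2.1 hh
        simp only [Fin.val_two]
        omega
    -- select the job at each position on each machine
    have hex : ∀ (t : Fin 3) (i' : Fin n), ∃ j, σ.mach j = i' ∧ σ.pos j = (t : ℕ) + 1 := by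
      intro t i'
      refine exists_pos_eq σ i' _ (by omega) ?_
      rw [hload]
      have := t.isLt
      omega
    choose g hgm hgp using hex
    have hgt : ∀ t i', (g t i').1 = t := by
      intro t i'
      have h := htype (g t i')
      rw [hgp] at h
      exact Fin.ext (by omega)
    have hgpair : ∀ t i', g t i' = (t, (g t i').2) := fun t i' =>
      Prod.ext (hgt t i') rfl
    -- the filter appearing in the completion time of the last job on machine i'
    have hfib : ∀ i', (Finset.univ.filter fun j' =>
        σ.mach j' = σ.mach (g 2 i') ∧ σ.pos j' ≤ σ.pos (g 2 i'))
        = {g 0 i', g 1 i', g 2 i'} := by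
      intro i'
      ext j'
      simp only [Finset.mem_filter, Finset.mem_univ, true_and, Finset.mem_insert,
        Finset.mem_singleton, hgm 2 i', hgp 2 i']
      constructor
      · rintro ⟨hm', _⟩
        have hj := htype j'
        have heq : j' = g j'.1 i' :=
          σ.inj j' (g j'.1 i') (by rw [hgm, hm']) (by rw [hgp, hj])
        rcases fin3_cases j'.1 with h | h | h <;> rw [h] at heq
        · exact Or.inl heq
        · exact Or.inr (Or.inl heq)
        · exact Or.inr (Or.inr heq)
      · rintro (rfl | rfl | rfl)
        · exact ⟨hgm 0 i', by rw [hgp]; simp⟩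
        · exact ⟨hgm 1 i', by rw [hgp]; simp⟩
        · exact ⟨hgm 2 i', by rw [hgp]⟩
    have hne01 : ∀ i', g 0 i' ≠ g 1 i' := fun i' h => by
      have h0 := hgt 0 i'; rw [h, hgt 1 i'] at h0; exact absurd h0 (by decide)
    have hne02 : ∀ i', g 0 i' ≠ g 2 i' := fun i' h => by
      have h0 := hgt 0 i'; rw [h, hgt 2 i'] at h0; exact absurd h0 (by decide)
    have hne12 : ∀ i', g 1 i' ≠ g 2 i' := fun i' h => by
      have h0 := hgt 1 i'; rw [h, hgt 2 i'] at h0; exact absurd h0 (by decide)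
    have hkey : ∀ i', x ((g 0 i').2) + y ((g 1 i').2) + z ((g 2 i').2) ≤ b := by
      intro i'
      have hd := hdl (g 2 i')
      unfold Schedule.compl at hd
      rw [div_one, hfib i', Finset.sum_insert (by simp [hne01 i', hne02 i']),
        Finset.sum_insert (by simp [hne12 i']), Finset.sum_singleton, hD] at hd
      have hv0 : procNDM n x y z (g 0 i') = (x ((g 0 i').2) : ℝ) := by
        rw [hgpair 0 i', p_eval0]
      have hv1 : procNDM n x y z (g 1 i')
          = (y ((g 1 i').2) : ℝ) + ∑ i'', (x i'' : ℝ) := by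
        rw [hgpair 1 i', p_eval1]
      have hv2 : procNDM n x y z (g 2 i')
          = (z ((g 2 i').2) : ℝ) + ∑ i'', (y i'' : ℝ) + ∑ i'', (x i'' : ℝ) := by
        rw [hgpair 2 i', p_eval2]
      rw [hv0, hv1, hv2] at hd
      have hfin : (x ((g 0 i').2) : ℝ) + (y ((g 1 i').2) : ℝ) + (z ((g 2 i').2) : ℝ)
          ≤ (b : ℝ) := by linarith
      exact_mod_cast hfin
    have hginj : ∀ t : Fin 3, Function.Injective fun i' => (g t i').2 := by
      intro t a c hac
      simp only at hac
      have heq : g t a = g t c := by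
        rw [hgpair t a, hgpair t c, hac]
      calc a = σ.mach (g t a) := (hgm t a).symm
        _ = σ.mach (g t c) := by rw [heq]
        _ = c := hgm t c
    have hbij : ∀ t : Fin 3, Function.Bijective fun i' => (g t i').2 :=
      fun t => Finite.injective_iff_bijective.1 (hginj t)
    refine ⟨(Equiv.ofBijective _ (hbij 0)).symm.trans (Equiv.ofBijective _ (hbij 1)),
      (Equiv.ofBijective _ (hbij 0)).symm.trans (Equiv.ofBijective _ (hbij 2)), ?_⟩
    set e0 := Equiv.ofBijective _ (hbij 0) with he0
    set e1 := Equiv.ofBijective _ (hbij 1) with he1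
    set e2 := Equiv.ofBijective _ (hbij 2) with he2
    have happ : ∀ h : Fin n,
        x h + y ((e0.symm.trans e1) h) + z ((e0.symm.trans e2) h)
          = x ((g 0 (e0.symm h)).2) + y ((g 1 (e0.symm h)).2) + z ((g 2 (e0.symm h)).2) := by
      intro h
      have h0 : (g 0 (e0.symm h)).2 = h := Equiv.apply_symm_apply e0 h
      rw [Equiv.trans_apply, Equiv.trans_apply]
      rw [show e1 (e0.symm h) = (g 1 (e0.symm h)).2 from rfl,
        show e2 (e0.symm h) = (g 2 (e0.symm h)).2 from rfl, h0]
    have hle : ∀ h : Fin n,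
        x h + y ((e0.symm.trans e1) h) + z ((e0.symm.trans e2) h) ≤ b := by
      intro h
      rw [happ h]
      exact hkey (e0.symm h)
    intro h
    by_contra hne
    have hlt : ∑ h', (x h' + y ((e0.symm.trans e1) h') + z ((e0.symm.trans e2) h'))
        < ∑ _h' : Fin n, b :=
      Finset.sum_lt_sum (fun h' _ => hle h')
        ⟨h, Finset.mem_univ h, lt_of_le_of_ne (hle h) hne⟩
    rw [Finset.sum_const, Finset.card_univ, Fintype.card_fin, smul_eq_mul,
      Finset.sum_add_distrib, Finset.sum_add_distrib,
      Equiv.sum_comp (e0.symm.trans e1) y, Equiv.sum_comp (e0.symm.trans e2) z] at hlt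
    omega
end

section
/- Consider n jobs to be scheduled in total, each job J_j having positive processing time p_j, weight w_j ≥ 0, and due date d_j, and m machines partitioned into a set of high-speed machines (of speed V_1) and a set of low-speed machines (of speed V_0), with 0 < V_0 < V_1. Let s and s' be partial solutions, where a partial solution s consists of a partial schedule σ_s started at time 0 without idle time (giving machine completion times C_{M_i}(σ_s) and cost Σ_{j∈σ_s} w_j U_j(σ_s)), a set Ω_s of remaining candidate jobs, and nonnegative integers k_s^1 and k_s^0 with |σ_s| + k_s^1 + k_s^0 = n (and similarly for s'). Suppose: (1) C_{M_i}(σ_s) ≤ C_{M_i}(σ_{s'}) for every machine M_i; (2) Σ_{j∈σ_s} w_j U_j(σ_s) ≤ Σ_{j∈σ_{s'}} w_j U_j(σ_{s'}); (3) k_s^1 ≤ k_{s'}^1; (4) k_s^0 ≤ k_{s'}^0; (5) Ω_{s'} ⊆ Ω_s. Then the minimum total weighted number of tardy jobs over all completions of s is at most the minimum total weighted number of tardy jobs over all completions of s'; i.e., s dominates s'. -/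
/-- A partial solution: a partial schedule (on the jobs of `dom`, started at time 0
without idle time, with distinct contiguous 1-based positions on each machine), a set
`rem` (`Ω_s`) of remaining candidate jobs, and the numbers `k1` (resp. `k0`) of jobs
still to be scheduled on high-speed (resp. low-speed) machines. -/
structure PartialSol (J : Type) (m : ℕ) where
  dom : Finset J
  mach : J → Fin m
  pos : J → ℕ
  rem : Finset J
  k1 : ℕ
  k0 : ℕ
  pos_pos : ∀ j ∈ dom, 1 ≤ pos j
  inj : ∀ j ∈ dom, ∀ j' ∈ dom, mach j = mach j' → pos j = pos j' → j = j'
  contiguous : ∀ j ∈ dom, 2 ≤ pos j → ∃ j' ∈ dom, mach j' = mach j ∧ pos j' = pos j - 1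
  disj : Disjoint dom rem

namespace PartialSol

variable {J : Type} {m : ℕ} [DecidableEq J]

/-- Completion time `C_{M_i}(σ_s)` of machine `i` in the partial schedule. -/
noncomputable def machC (s : PartialSol J m) (p : J → ℝ) (V : Fin m → ℝ) (i : Fin m) : ℝ :=
  (∑ j ∈ s.dom.filter (fun j => s.mach j = i), p j) / V i

/-- Completion time of a scheduled job `j`. -/
noncomputable def jobC (s : PartialSol J m) (p : J → ℝ) (V : Fin m → ℝ) (j : J) : ℝ :=
  (∑ j' ∈ s.dom.filter (fun j' => s.mach j' = s.mach j ∧ s.pos j' ≤ s.pos j), p j')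
    / V (s.mach j)

/-- Cost `Σ_{j ∈ σ_s} w_j U_j(σ_s)`: total weight of the tardy scheduled jobs. -/
noncomputable def cost (s : PartialSol J m) (p w d : J → ℝ) (V : Fin m → ℝ) : ℝ :=
  ∑ j ∈ s.dom, if d j < s.jobC p V j then w j else 0

/-- `c` is a completion of `s`: it keeps every decision of `σ_s`, and appends `k1` jobs
from `Ω_s` on high-speed machines and `k0` jobs from `Ω_s` on low-speed machines (by
validity of the schedule, each appended job starts when its machine becomes
available). -/
def Completes (fast : Fin m → Bool) (c s : PartialSol J m) : Prop :=
  s.dom ⊆ c.dom ∧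
  (∀ j ∈ s.dom, c.mach j = s.mach j ∧ c.pos j = s.pos j) ∧
  c.dom \ s.dom ⊆ s.rem ∧
  ((c.dom \ s.dom).filter (fun j => fast (c.mach j) = true)).card = s.k1 ∧
  ((c.dom \ s.dom).filter (fun j => fast (c.mach j) = false)).card = s.k0

end PartialSol

/-!
From a completion `c'` of `s'`, keep `k_s^1` of its new jobs on high-speed machines and `k_s^0`
of its new jobs on low-speed machines (possible by (3) and (4); they are candidates for `s`
by (5)), and append them to `σ_s` on the same machines and in the same relative order as in
`c'`. By (1) every machine of `σ_s` becomes available no later than in `σ_{s'}`, and each kept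
job is preceded by a subset of the new jobs preceding it in `c'`, so it completes no later
than in `c'`. With (2) and `w ≥ 0` this completion of `s` costs at most as much as `c'`.
-/

open Finset

theorem Finset.exists_subset_card_filter_eq {α : Type*} [DecidableEq α] (N : Finset α)
    (g : α → Bool) {a b : ℕ} (ha : a ≤ #{x ∈ N | g x = true})
    (hb : b ≤ #{x ∈ N | g x = false}) :
    ∃ K ⊆ N, #{x ∈ K | g x = true} = a ∧ #{x ∈ K | g x = false} = b := by
  obtain ⟨A, hA, rfl⟩ := exists_subset_card_eq ha
  obtain ⟨B, hB, rfl⟩ := exists_subset_card_eq hb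
  have hAg : ∀ x ∈ A, g x = true := fun x hx => (mem_filter.mp (hA hx)).2
  have hBg : ∀ x ∈ B, g x = false := fun x hx => (mem_filter.mp (hB hx)).2
  refine ⟨A ∪ B, union_subset (hA.trans (filter_subset _ _)) (hB.trans (filter_subset _ _)),
    ?_, ?_⟩ <;> rw [filter_union]
  · rw [filter_true_of_mem hAg, filter_false_of_mem fun x hx => by simp [hBg x hx], union_empty]
  · rw [filter_false_of_mem fun x hx => by simp [hAg x hx], filter_true_of_mem hBg, empty_union]

namespace PartialSol

variable {J : Type} {m : ℕ}

section RankPos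

variable {κ : Type*} [LinearOrder κ] {D : Finset J} {mach : J → Fin m} {key : J → κ}

/-- The position of `j` on its machine when the jobs of `D` on each machine are sequenced by
increasing `key`. -/
def rankPos (D : Finset J) (mach : J → Fin m) (key : J → κ) (j : J) : ℕ :=
  #{k ∈ D | mach k = mach j ∧ key k ≤ key j}

theorem one_le_rankPos {j : J} (hj : j ∈ D) : 1 ≤ rankPos D mach key j :=
  card_pos.mpr ⟨j, mem_filter.mpr ⟨hj, rfl, le_rfl⟩⟩

theorem rankPos_mono {j j' : J} (hm : mach j = mach j') (hk : key j ≤ key j') :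
    rankPos D mach key j ≤ rankPos D mach key j' :=
  card_le_card fun k hk' => by
    simp only [mem_filter] at hk' ⊢
    exact ⟨hk'.1, hk'.2.1.trans hm, hk'.2.2.trans hk⟩

theorem rankPos_strictMono {j j' : J} (hj' : j' ∈ D) (hm : mach j = mach j')
    (hk : key j < key j') : rankPos D mach key j < rankPos D mach key j' := by
  refine card_lt_card ((ssubset_iff_of_subset fun k hk' => ?_).mpr ⟨j', ?_, ?_⟩)
  · simp only [mem_filter] at hk' ⊢
    exact ⟨hk'.1, hk'.2.1.trans hm, hk'.2.2.trans hk.le⟩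
  · exact mem_filter.mpr ⟨hj', rfl, le_rfl⟩
  · simp [hk]

theorem rankPos_le_rankPos_iff {j j' : J} (hj : j ∈ D) (hm : mach j = mach j') :
    rankPos D mach key j ≤ rankPos D mach key j' ↔ key j ≤ key j' :=
  ⟨fun h => not_lt.mp fun hk => (rankPos_strictMono hj hm.symm hk).not_ge h,
    rankPos_mono hm⟩

theorem rankPos_injOn
    (hkey : ∀ j ∈ D, ∀ j' ∈ D, mach j = mach j' → key j = key j' → j = j')
    {j j' : J} (hj : j ∈ D) (hj' : j' ∈ D) (hm : mach j = mach j')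
    (h : rankPos D mach key j = rankPos D mach key j') : j = j' :=
  hkey j hj j' hj' hm <| le_antisymm ((rankPos_le_rankPos_iff hj hm).mp h.le)
    ((rankPos_le_rankPos_iff hj' hm.symm).mp h.ge)

theorem exists_rankPos_eq_sub_one [DecidableEq J]
    (hkey : ∀ j ∈ D, ∀ j' ∈ D, mach j = mach j' → key j = key j' → j = j') {j : J}
    (hj : j ∈ D) (h2 : 2 ≤ rankPos D mach key j) :
    ∃ k ∈ D, mach k = mach j ∧ rankPos D mach key k = rankPos D mach key j - 1 := by
  set L := {k ∈ D | mach k = mach j ∧ key k < key j}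
  have hjL : {k ∈ D | mach k = mach j ∧ key k ≤ key j} = insert j L := by
    ext k
    simp only [mem_filter, mem_insert, L]
    constructor
    · rintro ⟨hk, hm, hle⟩
      rcases hle.eq_or_lt with heq | hlt
      · exact Or.inl (hkey k hk j hj hm heq)
      · exact Or.inr ⟨hk, hm, hlt⟩
    · rintro (rfl | ⟨hk, hm, hlt⟩)
      · exact ⟨hj, rfl, le_rfl⟩
      · exact ⟨hk, hm, hlt.le⟩
  have hcard : rankPos D mach key j = #L + 1 := by
    rw [rankPos, hjL, card_insert_of_notMem (by simp [L])]
  obtain ⟨k, hkL, hkmax⟩ := L.exists_max_image key (card_pos.mp (by omega))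
  obtain ⟨hk, hkm, hkj⟩ := mem_filter.mp hkL
  refine ⟨k, hk, hkm, ?_⟩
  have hkL' : {k' ∈ D | mach k' = mach k ∧ key k' ≤ key k} = L := by
    ext k'
    simp only [mem_filter, L, hkm]
    exact ⟨fun ⟨hk', hm, hle⟩ => ⟨hk', hm, hle.trans_lt hkj⟩,
      fun hk'L => ⟨hk'L.1, hk'L.2.1, hkmax k' (mem_filter.mpr hk'L)⟩⟩
  rw [rankPos, hkL', hcard, Nat.add_sub_cancel]

end RankPos

theorem exists_pos_eq_of_le (t : PartialSol J m) {k : J} (hk : k ∈ t.dom) {r : ℕ} (hr : 1 ≤ r)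
    (hrk : r ≤ t.pos k) : ∃ k₀ ∈ t.dom, t.mach k₀ = t.mach k ∧ t.pos k₀ = r := by
  obtain ⟨n, hn⟩ := Nat.exists_eq_add_of_le hrk
  induction n generalizing k with
  | zero => exact ⟨k, hk, rfl, hn⟩
  | succ n ih =>
    obtain ⟨k', hk', hm, hp⟩ := t.contiguous k hk (by omega)
    obtain ⟨k₀, hk₀, hm₀, hp₀⟩ := ih hk' (by omega) (by omega)
    exact ⟨k₀, hk₀, hm₀.trans hm, hp₀⟩

theorem rankPos_eq_pos (t : PartialSol J m) {j : J} (hj : j ∈ t.dom) :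
    rankPos t.dom t.mach t.pos j = t.pos j := by
  set F := {k ∈ t.dom | t.mach k = t.mach j ∧ t.pos k ≤ t.pos j}
  have himage : F.image t.pos = Icc 1 (t.pos j) := by
    ext r
    simp only [mem_image, mem_Icc, F, mem_filter]
    constructor
    · rintro ⟨k, ⟨hk, -, hle⟩, rfl⟩
      exact ⟨t.pos_pos k hk, hle⟩
    · rintro ⟨hr, hrj⟩
      obtain ⟨k, hk, hm, rfl⟩ := t.exists_pos_eq_of_le hj hr hrj
      exact ⟨k, ⟨hk, hm, hrj⟩, rfl⟩
  have hinj : Set.InjOn t.pos F := fun k hk k' hk' =>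
    t.inj k (mem_filter.mp hk).1 k' (mem_filter.mp hk').1
      ((mem_filter.mp hk).2.1.trans (mem_filter.mp hk').2.1.symm)
  rw [rankPos, ← card_image_of_injOn hinj, himage, Nat.card_Icc, Nat.add_sub_cancel]

def Extends (c s : PartialSol J m) : Prop :=
  s.dom ⊆ c.dom ∧ ∀ j ∈ s.dom, c.mach j = s.mach j ∧ c.pos j = s.pos j

variable [DecidableEq J]

theorem Completes.toExtends {fast : Fin m → Bool} {c s : PartialSol J m}
    (h : Completes fast c s) : c.Extends s :=
  ⟨h.1, h.2.1⟩

namespace Extends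

variable {c s : PartialSol J m}

theorem pos_lt_pos (h : c.Extends s) {k j : J} (hk : k ∈ s.dom) (hj : j ∈ c.dom \ s.dom)
    (hm : c.mach k = c.mach j) : c.pos k < c.pos j := by
  obtain ⟨hjc, hjs⟩ := mem_sdiff.mp hj
  obtain ⟨hmk, hpk⟩ := h.2 k hk
  by_contra! hle
  obtain ⟨k₀, hk₀, hm₀, hp₀⟩ :=
    s.exists_pos_eq_of_le hk (c.pos_pos j hjc) (hpk ▸ hle)
  have hk₀j : k₀ = j := c.inj k₀ (h.1 hk₀) j hjc
    (by rw [(h.2 k₀ hk₀).1, hm₀, ← hmk, hm]) (by rw [(h.2 k₀ hk₀).2, hp₀])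
  exact hjs (hk₀j ▸ hk₀)

theorem jobC_eq (h : c.Extends s) (p : J → ℝ) (V : Fin m → ℝ) {j : J} (hj : j ∈ s.dom) :
    c.jobC p V j = s.jobC p V j := by
  have hfilter : {k ∈ c.dom | c.mach k = c.mach j ∧ c.pos k ≤ c.pos j}
      = {k ∈ s.dom | s.mach k = s.mach j ∧ s.pos k ≤ s.pos j} := by
    ext k
    simp only [mem_filter]
    constructor
    · rintro ⟨hkc, hm, hle⟩
      by_cases hk : k ∈ s.dom
      · rw [(h.2 k hk).1, (h.2 j hj).1] at hm
        rw [(h.2 k hk).2, (h.2 j hj).2] at hle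
        exact ⟨hk, hm, hle⟩
      · exact absurd hle (h.pos_lt_pos hj (mem_sdiff.mpr ⟨hkc, hk⟩) hm.symm).not_ge
    · rintro ⟨hk, hm, hle⟩
      rw [(h.2 k hk).1, (h.2 k hk).2, (h.2 j hj).1, (h.2 j hj).2]
      exact ⟨h.1 hk, hm, hle⟩
  rw [jobC, jobC, hfilter, (h.2 j hj).1]

/-- An appended job starts when its machine becomes available after `σ_s`. -/
theorem jobC_eq_machC_add (h : c.Extends s) (p : J → ℝ) (V : Fin m → ℝ) {j : J}
    (hj : j ∈ c.dom \ s.dom) :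
    c.jobC p V j = s.machC p V (c.mach j) +
      (∑ k ∈ c.dom \ s.dom with c.mach k = c.mach j ∧ c.pos k ≤ c.pos j, p k) /
        V (c.mach j) := by
  have hfilter : {k ∈ c.dom | c.mach k = c.mach j ∧ c.pos k ≤ c.pos j}
      = {k ∈ s.dom | s.mach k = c.mach j}
        ∪ {k ∈ c.dom \ s.dom | c.mach k = c.mach j ∧ c.pos k ≤ c.pos j} := by
    ext k
    simp only [mem_filter, mem_union, mem_sdiff]
    constructor
    · rintro ⟨hkc, hm, hle⟩
      by_cases hk : k ∈ s.dom
      · exact Or.inl ⟨hk, (h.2 k hk).1 ▸ hm⟩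
      · exact Or.inr ⟨⟨hkc, hk⟩, hm, hle⟩
    · rintro (⟨hk, hm⟩ | ⟨⟨hkc, -⟩, hm, hle⟩)
      · have hm' : c.mach k = c.mach j := (h.2 k hk).1.trans hm
        exact ⟨h.1 hk, hm', (h.pos_lt_pos hk hj hm').le⟩
      · exact ⟨hkc, hm, hle⟩
  have hdisj : Disjoint {k ∈ s.dom | s.mach k = c.mach j}
      {k ∈ c.dom \ s.dom | c.mach k = c.mach j ∧ c.pos k ≤ c.pos j} :=
    disjoint_filter_filter (disjoint_sdiff_self_right)
  rw [jobC, hfilter, sum_union hdisj, add_div, machC]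

theorem cost_eq (h : c.Extends s) (p w d : J → ℝ) (V : Fin m → ℝ) :
    c.cost p w d V =
      s.cost p w d V + ∑ j ∈ c.dom \ s.dom, if d j < c.jobC p V j then w j else 0 := by
  rw [cost, ← union_sdiff_of_subset h.1, sum_union disjoint_sdiff, cost,
    union_sdiff_of_subset h.1]
  congr 1
  exact sum_congr rfl fun j hj => by rw [h.jobC_eq p V hj]

end Extends

section Append

variable (s : PartialSol J m) (K : Finset J) (mach' : J → Fin m) (pos' : J → ℕ)

def appendMach (j : J) : Fin m := if j ∈ s.dom then s.mach j else mach' j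

/-- The jobs of `σ_s` come first, in their order; the appended jobs follow in the order of
`pos'`. -/
def appendKey (j : J) : ℕ ×ₗ ℕ :=
  if j ∈ s.dom then toLex (0, s.pos j) else toLex (1, pos' j)

variable {s K mach' pos'}

theorem appendKey_injOn
    (hinj : ∀ j ∈ K, ∀ j' ∈ K, mach' j = mach' j' → pos' j = pos' j' → j = j') :
    ∀ j ∈ s.dom ∪ K, ∀ j' ∈ s.dom ∪ K, s.appendMach mach' j = s.appendMach mach' j' →
      s.appendKey pos' j = s.appendKey pos' j' → j = j' := by
  intro j hj j' hj' hm hk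
  by_cases hjs : j ∈ s.dom <;> by_cases hjs' : j' ∈ s.dom <;>
    simp only [appendMach, appendKey, hjs, hjs', if_true, if_false, toLex_inj,
      Prod.mk.injEq] at hm hk
  · exact s.inj j hjs j' hjs' hm hk.2
  · exact absurd hk.1 (by decide)
  · exact absurd hk.1 (by decide)
  · exact hinj j ((mem_union.mp hj).resolve_left hjs) j' ((mem_union.mp hj').resolve_left hjs')
      hm hk.2

variable (s K mach' pos')

def append (hinj : ∀ j ∈ K, ∀ j' ∈ K, mach' j = mach' j' → pos' j = pos' j' → j = j') :
    PartialSol J m where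
  dom := s.dom ∪ K
  mach := s.appendMach mach'
  pos := rankPos (s.dom ∪ K) (s.appendMach mach') (s.appendKey pos')
  rem := s.rem \ K
  k1 := 0
  k0 := 0
  pos_pos _ hj := one_le_rankPos hj
  inj _ hj _ hj' hm := rankPos_injOn (appendKey_injOn hinj) hj hj' hm
  contiguous _ hj := exists_rankPos_eq_sub_one (appendKey_injOn hinj) hj
  disj := disjoint_union_left.mpr ⟨s.disj.mono_right sdiff_subset, disjoint_sdiff⟩

variable {s K mach' pos'}
variable (hinj : ∀ j ∈ K, ∀ j' ∈ K, mach' j = mach' j' → pos' j = pos' j' → j = j')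

theorem append_pos_of_mem {j : J} (hj : j ∈ s.dom) :
    (s.append K mach' pos' hinj).pos j = s.pos j := by
  change rankPos _ _ _ j = _
  rw [← s.rankPos_eq_pos hj, rankPos, rankPos]
  congr 1
  ext k
  by_cases hk : k ∈ s.dom <;>
    simp [appendMach, appendKey, hj, hk, Prod.Lex.toLex_le_toLex]

theorem extends_append : (s.append K mach' pos' hinj).Extends s :=
  ⟨subset_union_left, fun _ hj => ⟨if_pos hj, append_pos_of_mem hinj hj⟩⟩

theorem append_mach_of_notMem {j : J} (hj : j ∉ s.dom) :
    (s.append K mach' pos' hinj).mach j = mach' j :=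
  if_neg hj

theorem dom_append_sdiff (hK : Disjoint s.dom K) :
    (s.append K mach' pos' hinj).dom \ s.dom = K :=
  union_sdiff_cancel_left hK

theorem append_pos_le_pos_iff {j j' : J} (hj : j ∈ K) (hjs : j ∉ s.dom) (hj's : j' ∉ s.dom)
    (hm : mach' j = mach' j') :
    (s.append K mach' pos' hinj).pos j ≤ (s.append K mach' pos' hinj).pos j' ↔
      pos' j ≤ pos' j' := by
  change rankPos _ _ _ j ≤ rankPos _ _ _ j' ↔ _
  rw [rankPos_le_rankPos_iff (mem_union_right _ hj) (by simp [appendMach, hjs, hj's, hm])]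
  simp [appendKey, hjs, hj's, Prod.Lex.toLex_le_toLex]

theorem completes_append (fast : Fin m → Bool) (hK : K ⊆ s.rem)
    (h1 : #{j ∈ K | fast (mach' j) = true} = s.k1)
    (h0 : #{j ∈ K | fast (mach' j) = false} = s.k0) :
    Completes fast (s.append K mach' pos' hinj) s := by
  have hKs : Disjoint s.dom K := s.disj.mono_right hK
  have hmach : ∀ j ∈ K, (s.append K mach' pos' hinj).mach j = mach' j :=
    fun j hj => append_mach_of_notMem hinj (disjoint_right.mp hKs hj)
  refine ⟨(extends_append hinj).1, (extends_append hinj).2, ?_, ?_, ?_⟩ <;>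
    rw [dom_append_sdiff hinj hKs]
  · exact hK
  · rwa [filter_congr fun j hj => by rw [hmach j hj]]
  · rwa [filter_congr fun j hj => by rw [hmach j hj]]

end Append

theorem jobC_append_le {s s' c' : PartialSol J m} {K : Finset J} (hc' : c'.Extends s')
    {p : J → ℝ} (hp : ∀ j, 0 ≤ p j) {V : Fin m → ℝ} (hV : ∀ i, 0 ≤ V i)
    (hmachC : ∀ i, s.machC p V i ≤ s'.machC p V i) (hKs : Disjoint s.dom K)
    (hK : K ⊆ c'.dom \ s'.dom)
    (hinj : ∀ j ∈ K, ∀ j' ∈ K, c'.mach j = c'.mach j' → c'.pos j = c'.pos j' → j = j')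
    {j : J} (hj : j ∈ K) :
    (s.append K c'.mach c'.pos hinj).jobC p V j ≤ c'.jobC p V j := by
  have hjs : j ∉ s.dom := disjoint_right.mp hKs hj
  have hjnew : j ∈ (s.append K c'.mach c'.pos hinj).dom \ s.dom := by
    rw [dom_append_sdiff hinj hKs]; exact hj
  rw [(extends_append hinj).jobC_eq_machC_add p V hjnew, hc'.jobC_eq_machC_add p V (hK hj),
    append_mach_of_notMem hinj hjs, dom_append_sdiff hinj hKs]
  refine add_le_add (hmachC _) (div_le_div_of_nonneg_right ?_ (hV _))
  refine sum_le_sum_of_subset_of_nonneg (fun k hk => ?_) fun k _ _ => hp k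
  obtain ⟨hkK, hm, hle⟩ := mem_filter.mp hk
  have hks : k ∉ s.dom := disjoint_right.mp hKs hkK
  rw [append_mach_of_notMem hinj hks] at hm
  exact mem_filter.mpr ⟨hK hkK, hm, (append_pos_le_pos_iff hinj hkK hks hjs hm).mp hle⟩

theorem cost_le_cost_of_extends {s s' c c' : PartialSol J m} (hc : c.Extends s)
    (hc' : c'.Extends s') {p w d : J → ℝ} (hw : ∀ j, 0 ≤ w j) {V : Fin m → ℝ}
    (hcost : s.cost p w d V ≤ s'.cost p w d V) (hnew : c.dom \ s.dom ⊆ c'.dom \ s'.dom)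
    (hjobC : ∀ j ∈ c.dom \ s.dom, c.jobC p V j ≤ c'.jobC p V j) :
    c.cost p w d V ≤ c'.cost p w d V := by
  rw [hc.cost_eq, hc'.cost_eq]
  refine add_le_add hcost ?_
  calc ∑ j ∈ c.dom \ s.dom, (if d j < c.jobC p V j then w j else 0)
      ≤ ∑ j ∈ c.dom \ s.dom, (if d j < c'.jobC p V j then w j else 0) :=
        sum_le_sum fun j hj => by
          have := hjobC j hj
          split_ifs <;> linarith [hw j]
    _ ≤ ∑ j ∈ c'.dom \ s'.dom, (if d j < c'.jobC p V j then w j else 0) :=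
        sum_le_sum_of_subset_of_nonneg hnew fun j _ _ => by split_ifs <;> simp [hw j]

end PartialSol

theorem dominance_rule_general
    {J : Type} [DecidableEq J] {m : ℕ}
    (p w d : J → ℝ) (hp : ∀ j, 0 < p j) (hw : ∀ j, 0 ≤ w j)
    (fast : Fin m → Bool) (V0 V1 : ℝ) (hV0 : 0 < V0) (hV01 : V0 < V1)
    (s s' : PartialSol J m)
    (h1 : ∀ i : Fin m, s.machC p (fun i => if fast i then V1 else V0) i
            ≤ s'.machC p (fun i => if fast i then V1 else V0) i)
    (h2 : s.cost p w d (fun i => if fast i then V1 else V0)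
            ≤ s'.cost p w d (fun i => if fast i then V1 else V0))
    (h3 : s.k1 ≤ s'.k1) (h4 : s.k0 ≤ s'.k0)
    (h5 : s'.rem ⊆ s.rem) :
    ∀ c' : PartialSol J m, PartialSol.Completes fast c' s' →
      ∃ c : PartialSol J m, PartialSol.Completes fast c s ∧
        c.cost p w d (fun i => if fast i then V1 else V0)
          ≤ c'.cost p w d (fun i => if fast i then V1 else V0) := by
  intro c' hc'
  obtain ⟨K, hKN, hK1, hK0⟩ := (c'.dom \ s'.dom).exists_subset_card_filter_eq
    (fun j => fast (c'.mach j)) (hc'.2.2.2.1 ▸ h3) (hc'.2.2.2.2 ▸ h4)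
  have hKrem : K ⊆ s.rem := hKN.trans (hc'.2.2.1.trans h5)
  have hKs : Disjoint s.dom K := s.disj.mono_right hKrem
  have hinj :
      ∀ j ∈ K, ∀ j' ∈ K, c'.mach j = c'.mach j' → c'.pos j = c'.pos j' → j = j' :=
    fun j hj j' hj' => c'.inj j (sdiff_subset (hKN hj)) j' (sdiff_subset (hKN hj'))
  have hV : ∀ i, 0 ≤ if fast i then V1 else V0 := fun i => by split_ifs <;> linarith
  have hc := PartialSol.completes_append hinj fast hKrem hK1 hK0
  refine ⟨_, hc, PartialSol.cost_le_cost_of_extends hc.toExtends hc'.toExtends hw h2 ?_ ?_⟩ <;>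
    rw [PartialSol.dom_append_sdiff hinj hKs]
  · exact hKN
  · exact fun j hj => PartialSol.jobC_append_le hc'.toExtends (fun j => (hp j).le) hV h1 hKs hKN
      hinj hj

/-- (Dominance rule.) If the partial solutions `s` and `s'` satisfy
(1) machine-wise smaller completion times, (2) smaller partial cost, (3) `k_s^1 ≤
k_{s'}^1`, (4) `k_s^0 ≤ k_{s'}^0`, and (5) `Ω_{s'} ⊆ Ω_s`, then the best completion of
`s` costs no more than the best completion of `s'`: `s` dominates `s'`. -/
theorem dominance_rule
    {J : Type} [Fintype J] [DecidableEq J] {m n : ℕ}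
    (p w d : J → ℝ) (hp : ∀ j, 0 < p j) (hw : ∀ j, 0 ≤ w j)
    (fast : Fin m → Bool) (V0 V1 : ℝ) (hV0 : 0 < V0) (hV01 : V0 < V1)
    (s s' : PartialSol J m)
    (hns : s.dom.card + s.k1 + s.k0 = n)
    (hns' : s'.dom.card + s'.k1 + s'.k0 = n)
    (h1 : ∀ i : Fin m, s.machC p (fun i => if fast i then V1 else V0) i
            ≤ s'.machC p (fun i => if fast i then V1 else V0) i)
    (h2 : s.cost p w d (fun i => if fast i then V1 else V0)
            ≤ s'.cost p w d (fun i => if fast i then V1 else V0))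
    (h3 : s.k1 ≤ s'.k1) (h4 : s.k0 ≤ s'.k0)
    (h5 : s'.rem ⊆ s.rem) :
    ∀ c' : PartialSol J m, PartialSol.Completes fast c' s' →
      ∃ c : PartialSol J m, PartialSol.Completes fast c s ∧
        c.cost p w d (fun i => if fast i then V1 else V0)
          ≤ c'.cost p w d (fun i => if fast i then V1 else V0) :=
  dominance_rule_general p w d hp hw fast V0 V1 hV0 hV01 s s' h1 h2 h3 h4 h5
end

section
/- Let t_1 ≤ t_2 ≤ … ≤ t_n be fixed completion times and let n jobs be given, job J_j having due date d_j and weight w_j ≥ 0; an assignment is a bijection between the jobs and the completion times, and its cost is the total weight of the jobs assigned to a completion time exceeding their due date. If at least one job J_j satisfies d_j ≥ t_n, then there exists a minimum-cost assignment in which the largest completion time t_n is assigned a job of maximum weight among all jobs J_j with d_j ≥ t_n. -/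
/-- (Greedy exchange step.) Given fixed completion times
`t_1 ≤ … ≤ t_n`, jobs with due dates `d_j` and weights `w_j ≥ 0`, where an assignment is
a bijection `π` of jobs to completion times with cost `Σ_j w_j·[d_j < t_{π j}]`: if some
job satisfies `d_j ≥ t_n`, then there is a minimum-cost assignment in which the largest
completion time `t_n` is assigned a job of maximum weight among all jobs with
`d_j ≥ t_n`. -/
theorem greedy_exchange_largest_completion_time
    {n : ℕ} (hn : 0 < n) (t d w : Fin n → ℝ)
    (ht : Monotone t) (hw : ∀ j, 0 ≤ w j)
    (hex : ∃ j, t ⟨n - 1, by omega⟩ ≤ d j) :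
    ∃ π : Equiv.Perm (Fin n),
      (∀ ρ : Equiv.Perm (Fin n),
          (∑ j, if d j < t (π j) then w j else 0)
            ≤ ∑ j, if d j < t (ρ j) then w j else 0) ∧
      t ⟨n - 1, by omega⟩ ≤ d (π.symm ⟨n - 1, by omega⟩) ∧
      ∀ j, t ⟨n - 1, by omega⟩ ≤ d j → w j ≤ w (π.symm ⟨n - 1, by omega⟩) := by
  set last : Fin n := ⟨n - 1, by omega⟩ with hlast
  have htle : ∀ i : Fin n, t i ≤ t last := by
    intro i
    apply ht
    rw [Fin.le_def]
    have := i.2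
    simp only [hlast]
    omega
  obtain ⟨ρ₀, -, hρ₀⟩ := Finset.exists_min_image (Finset.univ : Finset (Equiv.Perm (Fin n)))
    (fun ρ => ∑ j, if d j < t (ρ j) then w j else 0) Finset.univ_nonempty
  obtain ⟨js, hjs⟩ := hex
  obtain ⟨jstar, hjmem, hjmax⟩ := Finset.exists_max_image
    (Finset.univ.filter (fun j => t last ≤ d j)) w ⟨js, by simp [hjs]⟩
  simp only [Finset.mem_filter, Finset.mem_univ, true_and] at hjmem hjmax
  have hjmax' : ∀ j, t last ≤ d j → w j ≤ w jstar := by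
    intro j hj; exact hjmax j (by simp [hj])
  by_cases hcase : ρ₀ jstar = last
  · have hs : ρ₀.symm last = jstar := by rw [← hcase, Equiv.symm_apply_apply]
    exact ⟨ρ₀, fun ρ => hρ₀ ρ (Finset.mem_univ ρ), by rw [hs]; exact hjmem,
      fun j hj => by rw [hs]; exact hjmax' j hj⟩
  · set k := ρ₀.symm last with hkdef
    have hk : ρ₀ k = last := Equiv.apply_symm_apply _ _
    have hkj : k ≠ jstar := fun h => hcase (h ▸ hk)
    set π := ρ₀.trans (Equiv.swap last (ρ₀ jstar)) with hπdef
    have hπ : ∀ j, π j = Equiv.swap last (ρ₀ jstar) (ρ₀ j) := fun j => rfl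
    have hπsymm : π.symm last = jstar := by
      simp [hπdef, Equiv.symm_trans_apply, Equiv.swap_apply_left]
    set F : Fin n → ℝ := fun j => if d j < t (π j) then w j else 0 with hF
    set G : Fin n → ℝ := fun j => if d j < t (ρ₀ j) then w j else 0 with hG
    have split : ∀ H : Fin n → ℝ,
        ∑ j, H j = H jstar + (H k + ∑ j ∈ (Finset.univ.erase jstar).erase k, H j) := by
      intro H
      rw [Finset.add_sum_erase _ H (Finset.mem_erase.mpr ⟨hkj, Finset.mem_univ k⟩),
        Finset.add_sum_erase _ H (Finset.mem_univ jstar)]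
    have key : ∑ j, F j ≤ ∑ j, G j := by
      rw [split F, split G]
      have h1 : F jstar = 0 := by
        have : π jstar = last := by rw [hπ, Equiv.swap_apply_right]
        simp only [hF, this, if_neg (not_lt.mpr hjmem)]
      have h3 : 0 ≤ G jstar := by
        simp only [hG]; split <;> [exact hw jstar; exact le_refl 0]
      have h2 : F k ≤ G k := by
        have hπk : π k = ρ₀ jstar := by rw [hπ, hk, Equiv.swap_apply_left]
        simp only [hF, hG, hπk, hk]
        by_cases hc : d k < t (ρ₀ jstar)
        · rw [if_pos hc, if_pos (lt_of_lt_of_le hc (htle _))]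
        · rw [if_neg hc]; split <;> [exact hw k; exact le_refl 0]
      have h4 : ∑ j ∈ (Finset.univ.erase jstar).erase k, F j
          = ∑ j ∈ (Finset.univ.erase jstar).erase k, G j := by
        apply Finset.sum_congr rfl
        intro j hj
        obtain ⟨hj1, hj2⟩ : j ≠ k ∧ j ≠ jstar := by
          simpa [Finset.mem_erase] using hj
        have hne1 : ρ₀ j ≠ last := fun h => hj1 (by rw [← hk] at h; exact ρ₀.injective h)
        have hne2 : ρ₀ j ≠ ρ₀ jstar := fun h => hj2 (ρ₀.injective h)
        simp only [hF, hG, hπ, Equiv.swap_apply_of_ne_of_ne hne1 hne2]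
      rw [h4]
      linarith
    refine ⟨π, fun ρ => le_trans key (hρ₀ ρ (Finset.mem_univ ρ)), ?_, ?_⟩
    · rw [hπsymm]; exact hjmem
    · intro j hj; rw [hπsymm]; exact hjmax' j hj
end
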